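/- arXiv:math/0402116 — 5 statements merged into one kernel-verified Lean document; each statement's English description precedes it below -/
import Mathlib

section
/- Let a_1,…,a_l (l ≥ 1) be integers that are pairwise distinct modulo n, let i be an index with 2 ≤ i ≤ l, and let h,k ∈ ℤ. Then, as n-periodic permutations of ℤ (products being composition, the right-hand factor applied first), (a_1,…,a_l)_{[h]} ∘ (a_1, a_i + kn) = (a_{i+1},…,a_l, a_1 + hn)_{[h+k]} ∘ (a_2,…,a_i)_{[−k]}. -/
/-- `w` is an `n`-periodic permutation of `ℤ`. -/
def IsPeriodic (n : ℕ) (w : Equiv.Perm ℤ) : Prop :=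
  ∀ x : ℤ, w (x + n) = w x + n

/-- `n` times the shift of the permutation `w`. -/
noncomputable def shiftSum (n : ℕ) (w : Equiv.Perm ℤ) : ℤ :=
  ∑ x ∈ Finset.Icc (1 : ℤ) (n : ℤ), (w x - x)

/-- Membership in the group `W` of type `Ã_{n-1}`: the `n`-periodic
permutations of `ℤ` of shift `0`. -/
def InAffineW (n : ℕ) (w : Equiv.Perm ℤ) : Prop :=
  IsPeriodic n w ∧ shiftSum n w = 0

/-- `w` is the `n`-periodic transposition `(a, b)`. -/
def IsTransposition (n : ℕ) (a b : ℤ) (w : Equiv.Perm ℤ) : Prop :=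
  (∀ k : ℤ, w (a + k * n) = b + k * n) ∧
  (∀ k : ℤ, w (b + k * n) = a + k * n) ∧
  (∀ x : ℤ, ¬ (n : ℤ) ∣ (x - a) → ¬ (n : ℤ) ∣ (x - b) → w x = x)

/-- `w` is a reflection of `W`. -/
def IsReflection (n : ℕ) (w : Equiv.Perm ℤ) : Prop :=
  ∃ a b : ℤ, ¬ (n : ℤ) ∣ (a - b) ∧ IsTransposition n a b w

/-- The reflection length `l_R` of an element of `W`. -/
noncomputable def reflLength (n : ℕ) (w : Equiv.Perm ℤ) : ℕ :=
  sInf {m | ∃ L : List (Equiv.Perm ℤ), L.length = m ∧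
    (∀ r ∈ L, IsReflection n r) ∧ L.prod = w}

/-- `v ≼ w` : `v` divides `w` with respect to the reflection length. -/
def RDvd (n : ℕ) (v w : Equiv.Perm ℤ) : Prop :=
  reflLength n w = reflLength n v + reflLength n (v⁻¹ * w)

/-- `w` is the `n`-periodic cycle `(L)_{[h]}` : it sends the `i`-th entry of `L`
(translated by `k * n`) to the `(i+1)`-th one, the last entry to the first one
shifted by `h * n`, and fixes every integer not congruent mod `n` to an entry of `L`. -/
def IsCycleList (n : ℕ) (L : List ℤ) (h : ℤ) (w : Equiv.Perm ℤ) : Prop :=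
  (∀ i : ℕ, i + 1 < L.length → ∀ k : ℤ,
      w (L.getD i 0 + k * n) = L.getD (i + 1) 0 + k * n) ∧
  (∀ hL : L ≠ [], ∀ k : ℤ, w (L.getLast hL + k * n) = L.head hL + (h + k) * n) ∧
  (∀ x : ℤ, (∀ a ∈ L, ¬ (n : ℤ) ∣ (x - a)) → w x = x)

/-! Put `c := Function.update a (l + 1) (a 1 + h * n)`. Then all three cycles become cycles of
consecutive entries of `c`: the hypothesis on `w₂` reads `(c (i+1), …, c (l+1))_{[h+k]}`, and
`(a_1,…,a_l)_{[h]}` sends `c j + m n ↦ c (j+1) + m n` for every `1 ≤ j ≤ l`. Both sides are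
then computed on each residue class `a_j + nℤ` separately (`j = 1`, `1 < j < i`, `j = i`,
`j > i`); off these classes every factor is the identity. -/
open Equiv Function

theorem List.map_range'_update_of_le {α : Type*} (c : ℕ → α) (y : α) {s len t : ℕ}
    (ht : s + len ≤ t) : (List.range' s len).map (update c t y) = (List.range' s len).map c :=
  List.map_congr_left fun j hj => update_of_ne (by rw [List.mem_range'_1] at hj; omega) _ _

theorem List.map_range'_append_singleton {α : Type*} (c : ℕ → α) (y : α) (s len : ℕ) :
    (List.range' s len).map c ++ [y] = (List.range' s (len + 1)).map (update c (s + len) y) := by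
  rw [List.range'_concat, List.map_append, List.map_range'_update_of_le c y le_rfl]
  simp

namespace IsTransposition

variable {n : ℕ} {a b : ℤ} {r : Perm ℤ}

theorem apply_eq_self (hr : IsTransposition n a b r) {x : ℤ} (ha : (a : ZMod n) ≠ x)
    (hb : (b : ZMod n) ≠ x) : r x = x :=
  hr.2.2 x (fun hdvd => ha ((ZMod.intCast_eq_intCast_iff_dvd_sub _ _ _).2 hdvd))
    fun hdvd => hb ((ZMod.intCast_eq_intCast_iff_dvd_sub _ _ _).2 hdvd)

end IsTransposition

namespace IsCycleList

variable {n : ℕ} {h : ℤ} {w : Perm ℤ} {c : ℕ → ℤ} {s len : ℕ}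

theorem apply_eq_self {L : List ℤ} (hw : IsCycleList n L h w) {x : ℤ}
    (hx : ∀ y ∈ L, (y : ZMod n) ≠ x) : w x = x :=
  hw.2.2 x fun y hy hdvd => hx y hy ((ZMod.intCast_eq_intCast_iff_dvd_sub _ _ _).2 hdvd)

theorem apply_eq_self_of_range' (hw : IsCycleList n ((List.range' s len).map c) h w) {x : ℤ}
    (hx : ∀ j, s ≤ j → j < s + len → (c j : ZMod n) ≠ x) : w x = x :=
  hw.apply_eq_self fun y hy => by
    obtain ⟨j, hj, rfl⟩ := List.mem_map.1 hy
    exact hx j (List.mem_range'_1.1 hj).1 (List.mem_range'_1.1 hj).2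

theorem apply_of_range'_of_lt (hw : IsCycleList n ((List.range' s len).map c) h w) {j : ℕ}
    (hsj : s ≤ j) (hj : j + 1 < s + len) (m : ℤ) : w (c j + m * n) = c (j + 1) + m * n := by
  have := hw.1 (j - s) (by simp; omega) m
  simpa [List.getD_eq_getElem?_getD, show j - s < len by omega, show j - s + 1 < len by omega,
    show s + (j - s) = j by omega, show s + (j - s + 1) = j + 1 by omega] using this

theorem apply_of_range'_last (hw : IsCycleList n ((List.range' s len).map c) h w) {t : ℕ}
    (hst : s ≤ t) (ht : t + 1 = s + len) (m : ℤ) : w (c t + m * n) = c s + (h + m) * n := by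
  have hne : (List.range' s len).map c ≠ [] := by simp; omega
  simpa [List.getLast_map, List.head_map, List.getLast_range', List.head_range',
    show s + len - 1 = t by omega] using hw.2.1 hne m

theorem apply_of_range'_of_closed (hw : IsCycleList n ((List.range' s len).map c) h w)
    (hclose : c (s + len) = c s + h * n) {j : ℕ} (hsj : s ≤ j) (hj : j < s + len) (m : ℤ) :
    w (c j + m * n) = c (j + 1) + m * n := by
  obtain hlt | heq : j + 1 < s + len ∨ j + 1 = s + len := by omega
  · exact hw.apply_of_range'_of_lt hsj hlt m
  · rw [hw.apply_of_range'_last hsj heq, heq, hclose]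
    ring

end IsCycleList

theorem IsCycleList.apply_eq_self_of_range'_succ {n : ℕ} {h : ℤ} {w : Perm ℤ} {c : ℕ → ℤ}
    {s len t : ℕ} (hw : IsCycleList n ((List.range' s (len + 1)).map c) h w)
    (hlast : (c (s + len) : ZMod n) = c t) {x : ℤ}
    (hx : ∀ j, s ≤ j → j < s + len → (c j : ZMod n) ≠ x) (ht : (c t : ZMod n) ≠ x) : w x = x :=
  hw.apply_eq_self_of_range' fun j hsj hj => by
    obtain hj | rfl : j < s + len ∨ j = s + len := by omega
    · exact hx j hsj hj
    · rwa [hlast]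

section

variable {n l i : ℕ} {c : ℕ → ℤ} {h k : ℤ} {w₁ r w₂ w₃ : Perm ℤ}

theorem IsCycleList.mul_transposition_apply_add_mul
    (hinj : Set.InjOn (fun j => (c j : ZMod n)) (Set.Icc 1 l))
    (hclose : c (l + 1) = c 1 + h * n) (hi2 : 2 ≤ i) (hil : i ≤ l)
    (hw₁ : IsCycleList n ((List.range' 1 l).map c) h w₁)
    (hr : IsTransposition n (c 1) (c i + k * n) r)
    (hw₂ : IsCycleList n ((List.range' (i + 1) (l - i + 1)).map c) (h + k) w₂)
    (hw₃ : IsCycleList n ((List.range' 2 (i - 1)).map c) (-k) w₃)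
    {j : ℕ} (hj1 : 1 ≤ j) (hjl : j ≤ l) (m : ℤ) :
    w₁ (r (c j + m * n)) = w₂ (w₃ (c j + m * n)) := by
  have hne : ∀ j j', 1 ≤ j ∧ j ≤ l ∧ 1 ≤ j' ∧ j' ≤ l ∧ j ≠ j' → ∀ m : ℤ,
      (c j : ZMod n) ≠ ((c j' + m * n : ℤ) : ZMod n) :=
    fun j j' h m => by simpa using hinj.ne ⟨h.1, h.2.1⟩ ⟨h.2.2.1, h.2.2.2.1⟩ h.2.2.2.2
  have hw₁' : ∀ j, 1 ≤ j → j ≤ l → ∀ m : ℤ, w₁ (c j + m * n) = c (j + 1) + m * n :=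
    fun j h1 h2 => hw₁.apply_of_range'_of_closed (by rwa [add_comm]) h1 (by omega)
  have hlast : (c (i + 1 + (l - i)) : ZMod n) = c 1 := by
    simp [show i + 1 + (l - i) = l + 1 by omega, hclose]
  rcases eq_or_ne j 1 with rfl | hj1'
  · rw [hr.1, add_assoc, ← add_mul, hw₁' i (by omega) hil,
      hw₃.apply_eq_self_of_range' fun j' _ _ => hne j' 1 (by omega) m,
      show c 1 + m * n = c (l + 1) + (m - h) * n by rw [hclose]; ring,
      hw₂.apply_of_range'_last (by omega) (by omega)]
    ring
  rcases lt_trichotomy j i with hji | rfl | hij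
  · rw [hr.apply_eq_self (hne 1 j (by omega) m) (by simpa using hne i j (by omega) m),
      hw₁' j hj1 hjl, hw₃.apply_of_range'_of_lt (by omega) (by omega),
      hw₂.apply_eq_self_of_range'_succ hlast (fun j' _ _ => hne j' (j + 1) (by omega) m)
        (hne 1 (j + 1) (by omega) m)]
  · rw [show r (c j + m * n) = c 1 + (m - k) * n by rw [← hr.2.1 (m - k)]; congr 1; ring,
      hw₁' 1 le_rfl (by omega), hw₃.apply_of_range'_last (by omega) (by omega),
      hw₂.apply_eq_self_of_range'_succ hlast (fun j' _ _ => hne j' 2 (by omega) _)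
        (hne 1 2 (by omega) _)]
    ring_nf
  · rw [hr.apply_eq_self (hne 1 j (by omega) m) (by simpa using hne i j (by omega) m),
      hw₁' j hj1 hjl, hw₃.apply_eq_self_of_range' fun j' _ _ => hne j' j (by omega) m,
      hw₂.apply_of_range'_of_lt (by omega) (by omega)]

theorem IsCycleList.mul_transposition_eq
    (hinj : Set.InjOn (fun j => (c j : ZMod n)) (Set.Icc 1 l))
    (hclose : c (l + 1) = c 1 + h * n) (hi2 : 2 ≤ i) (hil : i ≤ l)
    (hw₁ : IsCycleList n ((List.range' 1 l).map c) h w₁)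
    (hr : IsTransposition n (c 1) (c i + k * n) r)
    (hw₂ : IsCycleList n ((List.range' (i + 1) (l - i + 1)).map c) (h + k) w₂)
    (hw₃ : IsCycleList n ((List.range' 2 (i - 1)).map c) (-k) w₃) :
    w₁ * r = w₂ * w₃ := by
  ext x
  simp only [Perm.mul_apply]
  by_cases hx : ∃ j ∈ Set.Icc 1 l, (c j : ZMod n) = x
  · obtain ⟨j, ⟨hj1, hjl⟩, hjx⟩ := hx
    obtain ⟨m, hm⟩ := (ZMod.intCast_eq_intCast_iff_dvd_sub _ _ _).1 hjx
    rw [show x = c j + m * n by linarith]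
    exact mul_transposition_apply_add_mul hinj hclose hi2 hil hw₁ hr hw₂ hw₃ hj1 hjl m
  · push Not at hx
    have hlast : (c (i + 1 + (l - i)) : ZMod n) = c 1 := by
      simp [show i + 1 + (l - i) = l + 1 by omega, hclose]
    rw [hr.apply_eq_self (hx 1 ⟨le_rfl, by omega⟩) (by simpa using hx i ⟨by omega, hil⟩),
      hw₁.apply_eq_self_of_range' fun j h1 h2 => hx j ⟨h1, by omega⟩,
      hw₃.apply_eq_self_of_range' fun j h1 h2 => hx j ⟨by omega, by omega⟩,
      hw₂.apply_eq_self_of_range'_succ hlast (fun j h1 h2 => hx j ⟨by omega, by omega⟩)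
        (hx 1 ⟨le_rfl, by omega⟩)]

end

theorem injOn_intCast_zmod_of_not_dvd_sub {n l : ℕ} {a : ℕ → ℤ}
    (hdist : ∀ i j, 1 ≤ i → i < j → j ≤ l → ¬ (n : ℤ) ∣ (a i - a j)) :
    Set.InjOn (fun j => (a j : ZMod n)) (Set.Icc 1 l) := by
  intro j hj j' hj' heq
  by_contra hne
  rcases Nat.lt_or_gt_of_ne hne with hlt | hlt
  · exact hdist j j' hj.1 hlt hj'.2 ((ZMod.intCast_eq_intCast_iff_dvd_sub _ _ _).1 heq.symm)
  · exact hdist j' j hj'.1 hlt hj.2 ((ZMod.intCast_eq_intCast_iff_dvd_sub _ _ _).1 heq)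

theorem statement0_general (n : ℕ) (l : ℕ) (a : ℕ → ℤ)
    (hdist : ∀ i j, 1 ≤ i → i < j → j ≤ l → ¬ (n : ℤ) ∣ (a i - a j))
    (i : ℕ) (hi2 : 2 ≤ i) (hil : i ≤ l) (h k : ℤ)
    (w₁ r w₂ w₃ : Equiv.Perm ℤ)
    (hw₁ : IsCycleList n ((List.range' 1 l).map a) h w₁)
    (hr : IsTransposition n (a 1) (a i + k * n) r)
    (hw₂ : IsCycleList n (((List.range' (i + 1) (l - i)).map a) ++ [a 1 + h * n])
      (h + k) w₂)
    (hw₃ : IsCycleList n ((List.range' 2 (i - 1)).map a) (-k) w₃) :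
    w₁ * r = w₂ * w₃ := by
  set c := update a (l + 1) (a 1 + h * n)
  have hca : ∀ j ≤ l, c j = a j := fun j hj => update_of_ne (by omega) _ _
  have hinj : Set.InjOn (fun j => (c j : ZMod n)) (Set.Icc 1 l) :=
    (injOn_intCast_zmod_of_not_dvd_sub hdist).congr fun j hj => by simp [hca j hj.2]
  refine IsCycleList.mul_transposition_eq (h := h) (k := k) hinj ?_ hi2 hil ?_ ?_ ?_ ?_
  · simp [c, hca 1 (by omega)]
  · rwa [List.map_range'_update_of_le _ _ (by omega)]
  · rwa [hca 1 (by omega), hca i hil]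
  · rwa [List.map_range'_append_singleton, show i + 1 + (l - i) = l + 1 by omega] at hw₂
  · rwa [List.map_range'_update_of_le _ _ (by omega)]

theorem statement0 (n : ℕ) (hn : 2 ≤ n) (l : ℕ) (hl : 1 ≤ l) (a : ℕ → ℤ)
    (hdist : ∀ i j, 1 ≤ i → i < j → j ≤ l → ¬ (n : ℤ) ∣ (a i - a j))
    (i : ℕ) (hi2 : 2 ≤ i) (hil : i ≤ l) (h k : ℤ)
    (w₁ r w₂ w₃ : Equiv.Perm ℤ)
    (hw₁ : IsCycleList n ((List.range' 1 l).map a) h w₁)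
    (hr : IsTransposition n (a 1) (a i + k * n) r)
    (hw₂ : IsCycleList n (((List.range' (i + 1) (l - i)).map a) ++ [a 1 + h * n])
      (h + k) w₂)
    (hw₃ : IsCycleList n ((List.range' 2 (i - 1)).map a) (-k) w₃) :
    w₁ * r = w₂ * w₃ :=
  statement0_general n l a hdist i hi2 hil h k w₁ r w₂ w₃ hw₁ hr hw₂ hw₃
end

section
/- Let T ⊆ ℤ satisfy T + n = T, and let W̃_T = {w ∈ W : w(x) = x for all x ∈ ℤ∖T} (a quasi-parabolic subgroup of W). Then for every w ∈ W̃_T, the reflection length of w computed inside W̃_T equals l_R(w); that is, the least m such that w is a product of m reflections of W each belonging to W̃_T equals the least m such that w is a product of m reflections of W. -/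
/-!
Write every reflection as `(a, b)`, moving the residue classes of `a` and `b`. Suppose
`w = r₁ ⋯ r_m` fixes the class of `γ` pointwise. Conjugating, the factors moving that class can be
pushed to the right end, where they read `(γ, c₁) ⋯ (γ, c_k)`, without changing `m`. This tail
fixes the class of `γ`, and rewriting two or three adjacent factors at a time turns it into at
most `k` reflections that avoid the class of `γ` and move no class that was not moved before.
Doing this for each of the finitely many classes outside `T` moved by a factor of a shortest
factorization of `w` gives a factorization of the same length inside `W̃_T`.
-/

open Equiv

section ClassSwap

/-- For `a ≢ b [ZMOD n]` this is the reflection `(a, b)`; for `a ≡ b` it translates the class of `a`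
by `b - a`, which keeps it a permutation. -/
def classSwap (n : ℕ) (a b : ℤ) : Perm ℤ where
  toFun x := if (x : ZMod n) = a then x + (b - a) else if (x : ZMod n) = b then x + (a - b) else x
  invFun x := if (x : ZMod n) = b then x + (a - b) else if (x : ZMod n) = a then x + (b - a) else x
  left_inv x := by dsimp only; split_ifs <;> push_cast at * <;> grind
  right_inv x := by dsimp only; split_ifs <;> push_cast at * <;> grind

variable {n : ℕ} {a b x : ℤ}

theorem classSwap_apply : classSwap n a b x =
    if (x : ZMod n) = a then x + (b - a) else if (x : ZMod n) = b then x + (a - b) else x :=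
  rfl

theorem classSwap_inv (n : ℕ) (a b : ℤ) : (classSwap n a b)⁻¹ = classSwap n b a :=
  rfl

theorem classSwap_apply_of_left (hx : (x : ZMod n) = a) : classSwap n a b x = x + (b - a) :=
  if_pos hx

theorem classSwap_apply_of_right (hab : (a : ZMod n) ≠ b) (hx : (x : ZMod n) = b) :
    classSwap n a b x = x + (a - b) := by
  rw [classSwap_apply, if_neg (hx ▸ hab.symm), if_pos hx]

theorem classSwap_apply_of_ne (ha : (x : ZMod n) ≠ a) (hb : (x : ZMod n) ≠ b) :
    classSwap n a b x = x := by
  rw [classSwap_apply, if_neg ha, if_neg hb]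

theorem classSwap_apply_left : classSwap n a b a = b := by
  rw [classSwap_apply_of_left rfl, add_sub_cancel]

theorem classSwap_comm (hab : (a : ZMod n) ≠ b) : classSwap n a b = classSwap n b a := by
  ext x
  simp only [classSwap_apply]
  split_ifs <;> grind

theorem classSwap_mul_self (hab : (a : ZMod n) ≠ b) : classSwap n a b * classSwap n a b = 1 := by
  nth_rw 1 [classSwap_comm hab, ← classSwap_inv, inv_mul_cancel]

theorem classSwap_add_of_cast_eq_zero {d : ℤ} (hd : (d : ZMod n) = 0) :
    classSwap n (a + d) (b + d) = classSwap n a b := by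
  ext x
  simp only [classSwap_apply]
  push_cast
  simp only [hd, add_zero, add_sub_add_right_eq_sub]

theorem cast_eq_cast_iff_dvd {x y : ℤ} : (x : ZMod n) = y ↔ (n : ℤ) ∣ x - y := by
  rw [eq_comm, ZMod.intCast_eq_intCast_iff_dvd_sub]

theorem isTransposition_classSwap (hab : (a : ZMod n) ≠ b) :
    IsTransposition n a b (classSwap n a b) := by
  refine ⟨fun k => ?_, fun k => ?_, fun x hxa hxb => ?_⟩
  · rw [classSwap_apply_of_left (by simp)]
    ring
  · rw [classSwap_apply_of_right hab (by simp)]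
    ring
  · exact classSwap_apply_of_ne (mt cast_eq_cast_iff_dvd.mp hxa) (mt cast_eq_cast_iff_dvd.mp hxb)

theorem IsTransposition.eq_classSwap {w : Perm ℤ} (hab : (a : ZMod n) ≠ b)
    (hw : IsTransposition n a b w) : w = classSwap n a b := by
  obtain ⟨ha, hb, hfix⟩ := hw
  ext x
  by_cases hxa : (x : ZMod n) = a
  · obtain ⟨k, hk⟩ := cast_eq_cast_iff_dvd.mp hxa
    rw [classSwap_apply_of_left hxa, show x = a + k * n by linarith, ha k]
    ring
  by_cases hxb : (x : ZMod n) = b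
  · obtain ⟨k, hk⟩ := cast_eq_cast_iff_dvd.mp hxb
    rw [classSwap_apply_of_right hab hxb, show x = b + k * n by linarith, hb k]
    ring
  rw [classSwap_apply_of_ne hxa hxb, hfix x (mt cast_eq_cast_iff_dvd.mpr hxa)
    (mt cast_eq_cast_iff_dvd.mpr hxb)]

theorem isReflection_iff {w : Perm ℤ} :
    IsReflection n w ↔ ∃ a b : ℤ, (a : ZMod n) ≠ b ∧ w = classSwap n a b := by
  simp only [IsReflection, ← cast_eq_cast_iff_dvd]
  refine ⟨fun ⟨a, b, hab, hw⟩ => ⟨a, b, hab, hw.eq_classSwap hab⟩, ?_⟩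
  rintro ⟨a, b, hab, rfl⟩
  exact ⟨a, b, hab, isTransposition_classSwap hab⟩

end ClassSwap

section Periodic

variable {n : ℕ} {p w : Perm ℤ}

theorem IsPeriodic.apply_add_mul (hw : IsPeriodic n w) (x k : ℤ) : w (x + k * n) = w x + k * n := by
  induction k using Int.induction_on with
  | zero => simp
  | succ k ih => rw [add_one_mul, ← add_assoc, hw, ih, add_assoc]
  | pred k ih =>
    have := hw (x + (-k - 1) * n)
    rw [show x + (-k - 1) * n + n = x + -k * n by ring, ih] at this
    linarith

theorem IsPeriodic.apply_eq_apply_add (hw : IsPeriodic n w) {u v : ℤ} (h : (u : ZMod n) = v) :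
    w u = w v + (u - v) := by
  obtain ⟨k, hk⟩ := cast_eq_cast_iff_dvd.mp h
  rw [show u = v + k * n by linarith, hw.apply_add_mul]
  ring

theorem IsPeriodic.cast_apply_eq_cast_apply_iff (hw : IsPeriodic n w) {x y : ℤ} :
    ((w x : ℤ) : ZMod n) = w y ↔ (x : ZMod n) = y := by
  refine ⟨fun h => ?_, fun h => by rw [hw.apply_eq_apply_add h]; push_cast; rw [h]; ring⟩
  have hx : x = y + (w x - w y) := w.injective <| by
    rw [hw.apply_eq_apply_add (u := y + (w x - w y)) (v := y) (by push_cast; rw [h]; ring)]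
    ring
  rw [hx]
  push_cast
  rw [h]
  ring

theorem IsPeriodic.mul (hp : IsPeriodic n p) (hw : IsPeriodic n w) : IsPeriodic n (p * w) :=
  fun x => by rw [Perm.mul_apply, hw, hp, Perm.mul_apply]

theorem IsPeriodic.inv (hw : IsPeriodic n w) : IsPeriodic n w⁻¹ :=
  fun x => by rw [Perm.inv_eq_iff_eq, hw, Perm.coe_inv, apply_symm_apply]

theorem isPeriodic_list_prod {L : List (Perm ℤ)} (hL : ∀ r ∈ L, IsPeriodic n r) :
    IsPeriodic n L.prod :=
  L.prod_induction _ (fun _ _ => IsPeriodic.mul) (fun _ => rfl) hL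

theorem isPeriodic_classSwap (a b : ℤ) : IsPeriodic n (classSwap n a b) := by
  intro x
  simp only [classSwap_apply, Int.cast_add, Int.cast_natCast, ZMod.natCast_self, add_zero]
  split_ifs <;> ring

theorem IsReflection.isPeriodic (hw : IsReflection n w) : IsPeriodic n w := by
  obtain ⟨a, b, -, rfl⟩ := isReflection_iff.mp hw
  exact isPeriodic_classSwap a b

theorem IsPeriodic.mul_classSwap_mul_inv (hp : IsPeriodic n p) (a b : ℤ) :
    p * classSwap n a b * p⁻¹ = classSwap n (p a) (p b) := by
  ext x
  obtain ⟨y, rfl⟩ := p.surjective x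
  simp only [Perm.mul_apply, Perm.coe_inv, symm_apply_apply, classSwap_apply,
    hp.cast_apply_eq_cast_apply_iff]
  split_ifs with ha hb
  · rw [hp.apply_eq_apply_add (v := b) (by push_cast; rw [ha]; ring), hp.apply_eq_apply_add ha]
    ring
  · rw [hp.apply_eq_apply_add (v := a) (by push_cast; rw [hb]; ring), hp.apply_eq_apply_add hb]
    ring
  · rfl

end Periodic

def MovesOnly (n : ℕ) (C : Set (ZMod n)) (w : Perm ℤ) : Prop :=
  ∀ x : ℤ, (x : ZMod n) ∉ C → w x = x

namespace MovesOnly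

variable {n : ℕ} {C D : Set (ZMod n)} {v w : Perm ℤ}

theorem mono (hw : MovesOnly n C w) (hCD : C ⊆ D) : MovesOnly n D w :=
  fun x hx => hw x fun h => hx (hCD h)

theorem inter (hC : MovesOnly n C w) (hD : MovesOnly n D w) : MovesOnly n (C ∩ D) w :=
  fun x hx => (not_and_or.mp hx).elim (hC x) (hD x)

theorem mul (hv : MovesOnly n C v) (hw : MovesOnly n C w) : MovesOnly n C (v * w) :=
  fun x hx => by rw [Perm.mul_apply, hw x hx, hv x hx]

theorem inv (hw : MovesOnly n C w) : MovesOnly n C w⁻¹ :=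
  fun x hx => by rw [Perm.inv_eq_iff_eq, hw x hx]

theorem list_prod {L : List (Perm ℤ)} (hL : ∀ r ∈ L, MovesOnly n C r) : MovesOnly n C L.prod :=
  L.prod_induction _ (fun _ _ => mul) (fun _ _ => rfl) hL

theorem of_mul_left (hv : MovesOnly n C v) (hvw : MovesOnly n C (v * w)) : MovesOnly n C w := by
  simpa using hv.inv.mul hvw

theorem cast_apply_mem_iff (hw : MovesOnly n C w) (x : ℤ) :
    ((w x : ℤ) : ZMod n) ∈ C ↔ (x : ZMod n) ∈ C := by
  by_cases hx : (x : ZMod n) ∈ C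
  · refine iff_of_true (by_contra fun hwx => ?_) hx
    exact hwx (by rwa [w.injective (hw _ hwx)])
  · rw [hw x hx]

end MovesOnly

section ClassSwapProducts

variable {n : ℕ} {C : Set (ZMod n)} {a b c₁ c₂ c₃ γ : ℤ}

theorem movesOnly_classSwap_iff (hab : (a : ZMod n) ≠ b) :
    MovesOnly n C (classSwap n a b) ↔ (a : ZMod n) ∈ C ∧ (b : ZMod n) ∈ C := by
  refine ⟨fun h => ⟨by_contra fun ha => hab ?_, by_contra fun hb => hab ?_⟩, ?_⟩
  · rw [← h a ha, classSwap_apply_left]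
  · rw [← h b hb, classSwap_apply_of_right hab rfl, add_sub_cancel]
  · rintro ⟨ha, hb⟩ x hx
    exact classSwap_apply_of_ne (fun h => hx (h ▸ ha)) (fun h => hx (h ▸ hb))

theorem IsReflection.exists_eq_classSwap {r : Perm ℤ} (hr : IsReflection n r)
    (hγ : ¬ MovesOnly n {(γ : ZMod n)}ᶜ r) : ∃ c : ℤ, (c : ZMod n) ≠ γ ∧ r = classSwap n γ c := by
  obtain ⟨a, b, hab, rfl⟩ := isReflection_iff.mp hr
  have normalize : ∀ {a b : ℤ}, (a : ZMod n) ≠ b → (a : ZMod n) = γ →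
      ∃ c : ℤ, (c : ZMod n) ≠ γ ∧ classSwap n a b = classSwap n γ c := fun {a b} hab ha =>
    ⟨b + (γ - a), by push_cast; rwa [ha, sub_self, add_zero, ← ha, ne_comm],
      by rw [← classSwap_add_of_cast_eq_zero (d := γ - a) (by push_cast; rw [ha, sub_self]),
        add_sub_cancel]⟩
  rw [movesOnly_classSwap_iff hab] at hγ
  simp only [Set.mem_compl_iff, Set.mem_singleton_iff, not_and_or, not_not] at hγ
  rcases hγ with ha | hb
  · exact normalize hab ha
  · rw [classSwap_comm hab]
    exact normalize hab.symm hb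

theorem classSwap_mul_classSwap_of_ne (hγ₁ : (γ : ZMod n) ≠ c₁) (hγ₂ : (γ : ZMod n) ≠ c₂)
    (h₁₂ : (c₁ : ZMod n) ≠ c₂) :
    classSwap n γ c₁ * classSwap n γ c₂ = classSwap n c₁ c₂ * classSwap n γ c₁ := by
  ext x
  simp only [Perm.mul_apply, classSwap_apply]
  split_ifs <;> push_cast at * <;> grind

theorem classSwap_mul_classSwap_mul_classSwap_of_eq (hγ₂ : (γ : ZMod n) ≠ c₂)
    (h₁₂ : (c₁ : ZMod n) = c₂) (h₂₃ : (c₂ : ZMod n) = c₃) :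
    classSwap n γ c₁ * classSwap n γ c₂ * classSwap n γ c₃ = classSwap n γ (c₁ - c₂ + c₃) := by
  ext x
  simp only [Perm.mul_apply, classSwap_apply]
  split_ifs <;> push_cast at * <;> grind

theorem classSwap_mul_classSwap_mul_classSwap_of_ne (hγ₂ : (γ : ZMod n) ≠ c₂)
    (hγ₃ : (γ : ZMod n) ≠ c₃) (h₁₂ : (c₁ : ZMod n) = c₂) (h₂₃ : (c₂ : ZMod n) ≠ c₃) :
    classSwap n γ c₁ * classSwap n γ c₂ * classSwap n γ c₃ =
      classSwap n c₂ c₃ * classSwap n γ (c₁ + (c₃ - c₂)) * classSwap n γ c₂ := by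
  have hconj : classSwap n c₃ c₂ * classSwap n γ c₁ * classSwap n c₂ c₃ =
      classSwap n γ (c₁ + (c₃ - c₂)) := by
    rw [← classSwap_inv n c₃ c₂, (isPeriodic_classSwap c₃ c₂).mul_classSwap_mul_inv,
      classSwap_apply_of_ne hγ₃ hγ₂, classSwap_apply_of_right h₂₃.symm h₁₂]
  rw [mul_assoc (classSwap n γ c₁), classSwap_mul_classSwap_of_ne hγ₂ hγ₃ h₂₃, ← hconj,
    ← classSwap_inv n c₂ c₃]
  group

end ClassSwapProducts

def HasReflFactorization (n : ℕ) (C : Set (ZMod n)) (k : ℕ) (w : Perm ℤ) : Prop :=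
  ∃ L : List (Perm ℤ), L.length ≤ k ∧ (∀ r ∈ L, IsReflection n r ∧ MovesOnly n C r) ∧ L.prod = w

section HasReflFactorization

variable {n : ℕ} {C D : Set (ZMod n)} {k l : ℕ} {v w : Perm ℤ}

theorem hasReflFactorization_list_prod {L : List (Perm ℤ)}
    (hL : ∀ r ∈ L, IsReflection n r ∧ MovesOnly n C r) :
    HasReflFactorization n C L.length L.prod :=
  ⟨L, le_rfl, hL, rfl⟩

theorem hasReflFactorization_one : HasReflFactorization n C 0 1 :=
  hasReflFactorization_list_prod (L := []) (by simp)

theorem hasReflFactorization_of_isReflection (hw : IsReflection n w) (hC : MovesOnly n C w) :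
    HasReflFactorization n C 1 w :=
  hasReflFactorization_list_prod (L := [w]) (by simpa using ⟨hw, hC⟩)

namespace HasReflFactorization

theorem mono (hw : HasReflFactorization n C k w) (hCD : C ⊆ D) (hkl : k ≤ l) :
    HasReflFactorization n D l w :=
  let ⟨L, hlen, hL, hprod⟩ := hw
  ⟨L, hlen.trans hkl, fun r hr => ⟨(hL r hr).1, (hL r hr).2.mono hCD⟩, hprod⟩

theorem mul (hv : HasReflFactorization n C k v) (hw : HasReflFactorization n C l w) :
    HasReflFactorization n C (k + l) (v * w) :=
  let ⟨L, hlen, hL, hprod⟩ := hv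
  let ⟨L', hlen', hL', hprod'⟩ := hw
  ⟨L ++ L', by simp only [List.length_append]; omega,
    fun r hr => (List.mem_append.mp hr).elim (hL r) (hL' r),
    by rw [List.prod_append, hprod, hprod']⟩

theorem movesOnly (hw : HasReflFactorization n C k w) : MovesOnly n C w := by
  obtain ⟨L, -, hL, rfl⟩ := hw
  exact MovesOnly.list_prod fun r hr => (hL r hr).2

theorem classSwap_mul {a b : ℤ} (hw : HasReflFactorization n C k w) (hab : (a : ZMod n) ≠ b)
    (ha : (a : ZMod n) ∈ C) (hb : (b : ZMod n) ∈ C) :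
    HasReflFactorization n C (k + 1) (classSwap n a b * w) := by
  rw [add_comm]
  exact (hasReflFactorization_of_isReflection (isReflection_iff.mpr ⟨a, b, hab, rfl⟩)
    ((movesOnly_classSwap_iff hab).mpr ⟨ha, hb⟩)).mul hw

end HasReflFactorization

end HasReflFactorization

section Cleaning

variable {n : ℕ} {C : Set (ZMod n)}

/-- Two leading factors `(γ, c₁) (γ, c₂)` cancel if `c₁ = c₂`, split off the reflection `(c₁, c₂)`
if `c₁ ≢ c₂`, and otherwise translate the class of `γ`, so that a third factor exists and absorbs
them. -/
theorem hasReflFactorization_prod_classSwap (γ : ℤ) :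
    ∀ cs : List ℤ, (∀ c ∈ cs, (c : ZMod n) ∈ C \ {(γ : ZMod n)}) →
      MovesOnly n {(γ : ZMod n)}ᶜ (cs.map (classSwap n γ)).prod →
      HasReflFactorization n (C \ {(γ : ZMod n)}) cs.length (cs.map (classSwap n γ)).prod
  | [], _, _ => hasReflFactorization_one
  | [c], hcs, hfix => by
    have := hfix γ (by simp)
    simp only [List.map_cons, List.map_nil, List.prod_cons, List.prod_nil, mul_one,
      classSwap_apply_left] at this
    exact absurd (this ▸ rfl) (hcs c (by simp)).2
  | c₁ :: c₂ :: rest, hcs, hfix => by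
    rw [List.forall_mem_cons, List.forall_mem_cons] at hcs
    obtain ⟨h₁, h₂, hrest⟩ := hcs
    have hγ₁ : (γ : ZMod n) ≠ c₁ := Ne.symm h₁.2
    have hγ₂ : (γ : ZMod n) ≠ c₂ := Ne.symm h₂.2
    simp only [List.map_cons, List.prod_cons, List.length_cons] at hfix ⊢
    by_cases h₁₂ : (c₁ : ZMod n) = c₂
    · by_cases e₁₂ : c₁ = c₂
      · subst e₁₂
        rw [← mul_assoc, classSwap_mul_self hγ₁, one_mul] at hfix ⊢
        exact (hasReflFactorization_prod_classSwap γ rest hrest hfix).mono subset_rfl (by omega)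
      cases rest with
      | nil =>
        have := hfix γ (by simp)
        simp only [List.map_nil, List.prod_nil, mul_one, Perm.mul_apply, classSwap_apply_left,
          classSwap_apply_of_right hγ₁ h₁₂.symm] at this
        exact absurd (by linarith) e₁₂
      | cons c₃ rest =>
        rw [List.forall_mem_cons] at hrest
        obtain ⟨h₃, hrest⟩ := hrest
        simp only [List.map_cons, List.prod_cons, List.length_cons, ← mul_assoc] at hfix ⊢
        by_cases h₂₃ : (c₂ : ZMod n) = c₃
        · have hc : ((c₁ - c₂ + c₃ : ℤ) : ZMod n) = c₁ := by push_cast; rw [h₂₃, sub_add_cancel]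
          rw [classSwap_mul_classSwap_mul_classSwap_of_eq hγ₂ h₁₂ h₂₃] at hfix ⊢
          exact (hasReflFactorization_prod_classSwap γ (_ :: rest)
            (List.forall_mem_cons.mpr ⟨hc ▸ h₁, hrest⟩) hfix).mono subset_rfl (by simp)
        · have hc : ((c₁ + (c₃ - c₂) : ℤ) : ZMod n) = c₃ := by push_cast; rw [h₁₂, add_sub_cancel]
          rw [classSwap_mul_classSwap_mul_classSwap_of_ne hγ₂ (Ne.symm h₃.2) h₁₂ h₂₃,
            mul_assoc, mul_assoc] at hfix ⊢
          have hrec := hasReflFactorization_prod_classSwap γ (_ :: c₂ :: rest)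
            (List.forall_mem_cons.mpr ⟨hc ▸ h₃, List.forall_mem_cons.mpr ⟨h₂, hrest⟩⟩)
            (by simpa using (movesOnly_classSwap_iff h₂₃).mpr ⟨hγ₂.symm, h₃.2⟩ |>.of_mul_left hfix)
          exact (hrec.classSwap_mul h₂₃ h₂ h₃).mono subset_rfl (by simp)
    · rw [← mul_assoc, classSwap_mul_classSwap_of_ne hγ₁ hγ₂ h₁₂, mul_assoc] at hfix ⊢
      have hrec := hasReflFactorization_prod_classSwap γ (c₁ :: rest)
        (List.forall_mem_cons.mpr ⟨h₁, hrest⟩)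
        (by simpa using (movesOnly_classSwap_iff h₁₂).mpr ⟨hγ₁.symm, hγ₂.symm⟩ |>.of_mul_left hfix)
      exact (hrec.classSwap_mul h₁₂ h₁ h₂).mono subset_rfl (by simp)
termination_by cs => cs.length

theorem exists_prod_eq_mul_prod_classSwap (γ : ℤ) {L : List (Perm ℤ)}
    (hL : ∀ r ∈ L, IsReflection n r ∧ MovesOnly n C r) :
    ∃ (N : List (Perm ℤ)) (cs : List ℤ), N.length + cs.length = L.length ∧
      (∀ r ∈ N, IsReflection n r ∧ MovesOnly n (C \ {(γ : ZMod n)}) r) ∧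
      (∀ c ∈ cs, (c : ZMod n) ∈ C \ {(γ : ZMod n)}) ∧
      L.prod = N.prod * (cs.map (classSwap n γ)).prod := by
  induction L with
  | nil => exact ⟨[], [], by simp⟩
  | cons r L ih =>
    rw [List.forall_mem_cons] at hL
    obtain ⟨⟨hr, hrC⟩, hL⟩ := hL
    obtain ⟨N, cs, hlen, hN, hcs, hprod⟩ := ih hL
    by_cases hrγ : MovesOnly n {(γ : ZMod n)}ᶜ r
    · refine ⟨r :: N, cs, by simp [← hlen]; omega, ?_, hcs, by simp [hprod, mul_assoc]⟩
      exact List.forall_mem_cons.mpr ⟨⟨hr, hrC.inter hrγ⟩, hN⟩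
    obtain ⟨c, hc, rfl⟩ := hr.exists_eq_classSwap hrγ
    have hp : IsPeriodic n N.prod⁻¹ := (isPeriodic_list_prod fun r hr => (hN r hr).1.isPeriodic).inv
    have hpC : MovesOnly n (C \ {(γ : ZMod n)}) N.prod⁻¹ :=
      (MovesOnly.list_prod fun r hr => (hN r hr).2).inv
    have hconj := hp.mul_classSwap_mul_inv γ c
    rw [hpC γ (by simp), inv_inv] at hconj
    refine ⟨N, N.prod⁻¹ c :: cs, by simp [← hlen]; omega, hN,
      List.forall_mem_cons.mpr ⟨(hpC.cast_apply_mem_iff c).mpr ⟨?_, hc⟩, hcs⟩, ?_⟩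
    · exact ((movesOnly_classSwap_iff hc.symm).mp hrC).2
    · rw [List.map_cons, List.prod_cons, ← hconj, List.prod_cons, hprod]
      group

end Cleaning

namespace HasReflFactorization

variable {n : ℕ} {C : Set (ZMod n)} {k : ℕ} {w : Perm ℤ}

theorem diff_singleton (hw : HasReflFactorization n C k w) {g : ZMod n}
    (hg : MovesOnly n {g}ᶜ w) : HasReflFactorization n (C \ {g}) k w := by
  obtain ⟨γ, rfl⟩ := ZMod.intCast_surjective g
  obtain ⟨L, hlen, hL, rfl⟩ := hw
  obtain ⟨N, cs, hNcs, hN, hcs, hprod⟩ := exists_prod_eq_mul_prod_classSwap γ hL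
  have hcsγ : MovesOnly n {(γ : ZMod n)}ᶜ (cs.map (classSwap n γ)).prod := by
    have hNγ := (hasReflFactorization_list_prod hN).movesOnly.mono (Set.sdiff_subset_compl _ _)
    exact hNγ.of_mul_left (hprod ▸ hg)
  rw [hprod]
  exact ((hasReflFactorization_list_prod hN).mul
    (hasReflFactorization_prod_classSwap γ cs hcs hcsγ)).mono subset_rfl (hNcs.trans_le hlen)

theorem diff_finset (hw : HasReflFactorization n C k w) (D : Finset (ZMod n))
    (hD : MovesOnly n (↑D)ᶜ w) : HasReflFactorization n (C \ ↑D) k w := by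
  classical
  induction D using Finset.induction_on with
  | empty => simpa using hw
  | insert g D _ ih =>
    rw [Finset.coe_insert] at hD ⊢
    rw [Set.insert_eq, Set.union_comm, ← Set.sdiff_sdiff]
    exact (ih (hD.mono (Set.compl_subset_compl.mpr (Set.subset_insert g _)))).diff_singleton
      (hD.mono (Set.compl_subset_compl.mpr (by simp)))

end HasReflFactorization

theorem exists_finset_movesOnly {n : ℕ} {L : List (Perm ℤ)} (hL : ∀ r ∈ L, IsReflection n r) :
    ∃ M : Finset (ZMod n), ∀ r ∈ L, MovesOnly n M r := by
  classical
  induction L with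
  | nil => exact ⟨∅, by simp⟩
  | cons r L ih =>
    rw [List.forall_mem_cons] at hL
    obtain ⟨a, b, hab, rfl⟩ := isReflection_iff.mp hL.1
    obtain ⟨M, hM⟩ := ih hL.2
    refine ⟨insert (a : ZMod n) (insert (b : ZMod n) M), List.forall_mem_cons.mpr ⟨?_, ?_⟩⟩
    · exact (movesOnly_classSwap_iff hab).mpr ⟨by simp, by simp⟩
    · exact fun r hr => (hM r hr).mono (by
      simp only [Finset.coe_insert]; exact (Set.subset_insert _ _).trans (Set.subset_insert _ _))

theorem hasReflFactorization_of_movesOnly {n : ℕ} {C : Set (ZMod n)} {L : List (Perm ℤ)}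
    (hL : ∀ r ∈ L, IsReflection n r) (hw : MovesOnly n C L.prod) :
    HasReflFactorization n C L.length L.prod := by
  classical
  obtain ⟨M, hM⟩ := exists_finset_movesOnly hL
  have hMC := (hasReflFactorization_list_prod fun r hr => ⟨hL r hr, hM r hr⟩).diff_finset
    (M.filter (· ∉ C)) (hw.mono fun g hg => by simp [hg])
  exact hMC.mono (fun g hg => by simp at hg; tauto) le_rfl

theorem intCast_mem_image_iff {n : ℕ} {T : Set ℤ} (hT : ∀ x : ℤ, x ∈ T ↔ x + (n : ℤ) ∈ T) (x : ℤ) :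
    (x : ZMod n) ∈ ((↑) : ℤ → ZMod n) '' T ↔ x ∈ T := by
  have hper : Function.Periodic (· ∈ T) (n : ℤ) := fun x => propext (hT x).symm
  refine ⟨fun ⟨y, hy, hyx⟩ => ?_, fun hx => ⟨x, hx, rfl⟩⟩
  obtain ⟨k, hk⟩ := cast_eq_cast_iff_dvd.mp hyx.symm
  have hxy : x = y + k * n := by linarith
  have hper_k := hper.int_mul k y
  rw [Int.cast_id] at hper_k
  rwa [hxy, hper_k]

theorem Nat.sInf_eq_sInf_of_subset_of_forall_exists_le {A B : Set ℕ} (hAB : A ⊆ B)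
    (hBA : ∀ m ∈ B, ∃ k ∈ A, k ≤ m) : sInf A = sInf B := by
  rcases B.eq_empty_or_nonempty with rfl | hB
  · rw [Set.subset_empty_iff.mp hAB]
  obtain ⟨k, hkA, hk⟩ := hBA _ (Nat.sInf_mem hB)
  exact le_antisymm ((Nat.sInf_le hkA).trans hk) (Nat.sInf_le (hAB (Nat.sInf_mem ⟨k, hkA⟩)))

theorem statement2_general (n : ℕ) (T : Set ℤ)
    (hT : ∀ x : ℤ, x ∈ T ↔ x + (n : ℤ) ∈ T)
    (w : Equiv.Perm ℤ) (hwT : ∀ x ∉ T, w x = x) :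
    sInf {m | ∃ L : List (Equiv.Perm ℤ), L.length = m ∧
        (∀ r ∈ L, IsReflection n r ∧ ∀ x ∉ T, r x = x) ∧ L.prod = w}
      = reflLength n w := by
  have hT' : ∀ r : Perm ℤ, (∀ x ∉ T, r x = x) ↔ MovesOnly n (((↑) : ℤ → ZMod n) '' T) r :=
    fun r => by simp only [MovesOnly, intCast_mem_image_iff hT]
  refine Nat.sInf_eq_sInf_of_subset_of_forall_exists_le ?_ ?_
  · rintro m ⟨L, hlen, hL, hprod⟩
    exact ⟨L, hlen, fun r hr => (hL r hr).1, hprod⟩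
  · rintro m ⟨L, rfl, hL, rfl⟩
    obtain ⟨L', hlen, hL', hprod⟩ := hasReflFactorization_of_movesOnly hL ((hT' _).mp hwT)
    exact ⟨L'.length, ⟨L', rfl, fun r hr => ⟨(hL' r hr).1, (hT' r).mpr (hL' r hr).2⟩, hprod⟩, hlen⟩

theorem statement2 (n : ℕ) (hn : 2 ≤ n) (T : Set ℤ)
    (hT : ∀ x : ℤ, x ∈ T ↔ x + (n : ℤ) ∈ T)
    (w : Equiv.Perm ℤ) (hw : InAffineW n w) (hwT : ∀ x ∉ T, w x = x) :
    sInf {m | ∃ L : List (Equiv.Perm ℤ), L.length = m ∧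
        (∀ r ∈ L, IsReflection n r ∧ ∀ x ∉ T, r x = x) ∧ L.prod = w}
      = reflLength n w :=
  statement2_general n T hT w hwT
end

section
/- Let c be a Coxeter element of W. Then there exists a partition {1,…,n} = {a_1,…,a_s} ⊔ {α_1,…,α_t} into two nonempty parts, with a_1 < a_2 < … < a_s and α_1 < α_2 < … < α_t, such that c = (a_1,a_2,…,a_s)_{[1]} ∘ (α_t,α_{t−1},…,α_1)_{[−1]}. -/
/-- `c` is a Coxeter element of `W` : a product of the Coxeter generators
`s_1, …, s_n` (where `s_i = (i, i+1)`), each occurring exactly once, in some order. -/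
def IsCoxeter (n : ℕ) (c : Equiv.Perm ℤ) : Prop :=
  ∃ s : Fin n → Equiv.Perm ℤ,
    (∀ i : Fin n, IsTransposition n ((i : ℤ) + 1) ((i : ℤ) + 2) (s i)) ∧
    ∃ e : Equiv.Perm (Fin n), c = (List.ofFn (fun j => s (e j))).prod

/-!
Write `c = s_{i₀} ⋯ s_{i₍ₙ₋₁₎}` and let `E x` be the position in this word of the letter exchanging
`x` and `x + 1` (modulo `n`). The letters act from right to left, so a point `x` with
`E (x - 1) < E x` is first pushed up, and keeps climbing as long as the positions of the edges
it meets decrease; it therefore stops exactly at the next point of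
`S = {x | E (x - 1) < E x}`. Reading the word backwards shows in the same way that `c⁻¹` sends every
point of `Sᶜ` to the next point of `Sᶜ`. Hence `c` is the product of the cycle of `S` moving every
point to its successor, which is `(a₁, …, aₛ)_{[1]}` for the increasing enumeration of
`S ∩ [1, n]`, and of the cycle of `Sᶜ` moving every point to its predecessor, which is
`(αₜ, …, α₁)_{[-1]}`. Both parts are nonempty: the edge of the first letter has its upper end in
`S` and its lower end outside.
-/

open Equiv Set

/-- `E x` is the position, in a word of permutations of `ℤ`, of the letter exchanging `x` and
`x + 1`. -/
structure SwapsEdgesAt (E : ℤ → ℕ) (j : ℕ) (t : Perm ℤ) : Prop where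
  up : ∀ x, E x = j → t x = x + 1
  down : ∀ x, E (x - 1) = j → t x = x - 1
  fix : ∀ x, E x ≠ j → E (x - 1) ≠ j → t x = x

namespace SwapsEdgesAt

variable {E E' : ℤ → ℕ} {j j' : ℕ} {t : Perm ℤ}

theorem ne (ht : SwapsEdgesAt E j t) {x : ℤ} (hx : E x = j) : E (x - 1) ≠ j := fun h => by
  have := (ht.up x hx).symm.trans (ht.down x h)
  omega

theorem inv (ht : SwapsEdgesAt E j t) : SwapsEdgesAt E j t⁻¹ where
  up x hx := by rw [Perm.inv_eq_iff_eq, ht.down (x + 1) (by simpa using hx), add_sub_cancel_right]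
  down x hx := by rw [Perm.inv_eq_iff_eq, ht.up (x - 1) hx, sub_add_cancel]
  fix x h₁ h₂ := by rw [Perm.inv_eq_iff_eq, ht.fix x h₁ h₂]

theorem of_iff (ht : SwapsEdgesAt E j t) (h : ∀ x, E' x = j' ↔ E x = j) :
    SwapsEdgesAt E' j' t where
  up x hx := ht.up x ((h x).1 hx)
  down x hx := ht.down x ((h _).1 hx)
  fix x h₁ h₂ := ht.fix x (mt (h x).2 h₁) (mt (h _).2 h₂)

end SwapsEdgesAt

theorem IsTransposition.swapsEdgesAt {n : ℕ} {a : ℤ} {E : ℤ → ℕ} {j : ℕ} {t : Perm ℤ}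
    (ht : IsTransposition n a (a + 1) t) (hE : ∀ x, E x = j ↔ (n : ℤ) ∣ x - a) :
    SwapsEdgesAt E j t where
  up x hx := by
    obtain ⟨k, hk⟩ := (hE x).1 hx
    rw [show x = a + k * n by linarith, ht.1 k]
    ring
  down x hx := by
    obtain ⟨k, hk⟩ := (hE _).1 hx
    rw [show x = a + 1 + k * n by linarith, ht.2.1 k]
    ring
  fix x h₁ h₂ := ht.2.2 x (mt (hE x).2 h₁) fun h => h₂ ((hE _).2 (by convert h using 1; ring))

/-- After the letters at positions `≥ k` have acted, the point `v` has climbed to `w`, crossing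
exactly the edges `(x, x + 1)` with `v ≤ x < w`. -/
def Climbed (E : ℤ → ℕ) (v u : ℤ) (k : ℕ) (w : ℤ) : Prop :=
  w ∈ Icc v u ∧ (∀ x ∈ Ico v w, k ≤ E x) ∧ ∀ x ∈ Ico w u, E x < k

section Chain

variable {E : ℤ → ℕ} {v u : ℤ}

theorem Climbed.step (hvu : v < u) (hv : E (v - 1) < E v) (hu : E (u - 1) < E u)
    (hanti : StrictAntiOn E (Ico v u)) {k : ℕ} {w : ℤ} {t : Perm ℤ}
    (hw : Climbed E v u (k + 1) w) (ht : SwapsEdgesAt E k t) : Climbed E v u k (t w) := by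
  obtain ⟨⟨hvw, hwu⟩, hbelow, habove⟩ := hw
  by_cases hk : E w = k
  · have hwu' : w < u := by
      refine lt_of_le_of_ne hwu fun hwu => ?_
      have := hbelow (w - 1) ⟨by omega, by omega⟩
      subst hwu
      omega
    rw [ht.up w hk]
    refine ⟨⟨by omega, by omega⟩, fun x ⟨hvx, hxw⟩ => ?_, fun x ⟨hwx, hxu⟩ => ?_⟩
    · rcases eq_or_lt_of_le (Int.lt_add_one_iff.1 hxw) with rfl | hxw
      · exact hk.ge
      · exact Nat.le_of_succ_le (hbelow x ⟨hvx, hxw⟩)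
    · exact hk ▸ hanti ⟨hvw, hwu'⟩ ⟨by omega, hxu⟩ (by omega)
  · have hk' : E (w - 1) ≠ k := by
      rcases eq_or_lt_of_le hvw with rfl | hvw
      · have := habove v ⟨le_rfl, hvu⟩
        omega
      · have := hbelow (w - 1) ⟨by omega, by omega⟩
        omega
    rw [ht.fix w hk hk']
    refine ⟨⟨hvw, hwu⟩, fun x hx => Nat.le_of_succ_le (hbelow x hx), fun x ⟨hwx, hxu⟩ => ?_⟩
    have hw := habove w ⟨le_rfl, by omega⟩
    rcases eq_or_lt_of_le hwx with rfl | hwx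
    · omega
    · have := hanti ⟨hvw, by omega⟩ ⟨by omega, hxu⟩ hwx
      omega

/-- A point `v` whose upper edge acts before its lower one climbs along the edges of decreasing
positions, up to the first point `u` where this fails. -/
theorem list_prod_apply_eq_of_chain {l : List (Perm ℤ)}
    (hl : ∀ j (hj : j < l.length), SwapsEdgesAt E j l[j]) (hE : ∀ x, E x < l.length)
    (hvu : v < u) (hv : E (v - 1) < E v) (hu : E (u - 1) < E u)
    (hchain : ∀ w ∈ Ioo v u, E w < E (w - 1)) : l.prod v = u := by
  have hanti : StrictAntiOn E (Ico v u) :=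
    strictAntiOn_of_lt_sub_one ordConnected_Ico fun a _ ha ha' =>
      hchain a ⟨by linarith [ha'.1], ha.2⟩
  have key : ∀ k (hk : k ≤ l.length), Climbed E v u k ((l.drop k).prod v) := by
    intro k hk
    induction hk using Nat.decreasingInduction with
    | of_succ k hk ih =>
      rw [List.drop_eq_getElem_cons hk, List.prod_cons, Perm.mul_apply]
      exact ih.step hvu hv hu hanti (hl k hk)
    | self => simpa [Climbed, hvu.le] using fun x _ _ => hE x
  obtain ⟨⟨-, hle⟩, -, habove⟩ := key 0 (Nat.zero_le _)
  rw [List.drop_zero] at hle habove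
  by_contra hne
  exact Nat.not_lt_zero _ (habove _ ⟨le_rfl, lt_of_le_of_ne hle hne⟩)

end Chain

def IsSuccOn (S : Set ℤ) (p : Perm ℤ) : Prop :=
  ∀ x ∈ S, ∀ y ∈ S, x < y → (∀ z ∈ Ioo x y, z ∉ S) → p x = y

section Word

variable {l : List (Perm ℤ)} {E : ℤ → ℕ}

theorem swapsEdgesAt_reverse_map_inv (hl : ∀ j (hj : j < l.length), SwapsEdgesAt E j l[j])
    (hE : ∀ x, E x < l.length) (j : ℕ) (hj : j < (l.map (·⁻¹)).reverse.length) :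
    SwapsEdgesAt (fun x => l.length - 1 - E x) j (l.map (·⁻¹)).reverse[j] := by
  simp only [List.length_reverse, List.length_map] at hj
  simp only [List.getElem_reverse, List.getElem_map, List.length_map]
  exact (hl _ (by omega)).inv.of_iff fun x => by have := hE x; omega

theorem isSuccOn_list_prod (hl : ∀ j (hj : j < l.length), SwapsEdgesAt E j l[j])
    (hE : ∀ x, E x < l.length) : IsSuccOn {x | E (x - 1) < E x} l.prod :=
  fun _ hx _ hy hxy hgap => list_prod_apply_eq_of_chain hl hE hxy hx hy fun w hw =>
    lt_of_le_of_ne (not_lt.1 (hgap w hw)) ((hl _ (hE w)).ne rfl).symm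

theorem isSuccOn_compl_inv_list_prod (hl : ∀ j (hj : j < l.length), SwapsEdgesAt E j l[j])
    (hE : ∀ x, E x < l.length) : IsSuccOn {x | E (x - 1) < E x}ᶜ l.prod⁻¹ := by
  have hE' (x : ℤ) : l.length - 1 - E x < (l.map (·⁻¹)).reverse.length := by
    have := hE x
    simp only [List.length_reverse, List.length_map]
    omega
  rw [List.prod_inv_reverse]
  convert isSuccOn_list_prod (swapsEdgesAt_reverse_map_inv hl hE) hE'
  ext x
  have := hE x
  have := hE (x - 1)
  have := (hl _ (hE x)).ne rfl
  simp only [mem_compl_iff, mem_ofPred_eq]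
  omega

end Word

def IsPeriodicSet (n : ℕ) (S : Set ℤ) : Prop :=
  ∀ x y, (n : ℤ) ∣ x - y → (x ∈ S ↔ y ∈ S)

theorem IsPeriodicSet.compl {n : ℕ} {S : Set ℤ} (hS : IsPeriodicSet n S) :
    IsPeriodicSet n Sᶜ :=
  fun x y hxy => not_congr (hS x y hxy)

theorem IsPeriodicSet.add_mul_mem_iff {n : ℕ} {S : Set ℤ} (hS : IsPeriodicSet n S) (x k : ℤ) :
    x + k * n ∈ S ↔ x ∈ S :=
  hS _ _ ⟨k, by ring⟩

theorem exists_succ_mem {S : Set ℤ} {x : ℤ} (h : ∃ y ∈ S, x < y) :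
    ∃ y ∈ S, x < y ∧ ∀ z ∈ Ioo x y, z ∉ S := by
  obtain ⟨y, ⟨hyS, hxy⟩, hmin⟩ :=
    Int.exists_least_of_bdd (P := fun y => y ∈ S ∧ x < y) ⟨x, fun _ hz => hz.2.le⟩ h
  exact ⟨y, hyS, hxy, fun z hz hzS => (hmin z ⟨hzS, hz.1⟩).not_gt hz.2⟩

theorem exists_pred_mem {S : Set ℤ} {x : ℤ} (h : ∃ y ∈ S, y < x) :
    ∃ y ∈ S, y < x ∧ ∀ z ∈ Ioo y x, z ∉ S := by
  obtain ⟨y, ⟨hyS, hyx⟩, hmax⟩ :=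
    Int.exists_greatest_of_bdd (P := fun y => y ∈ S ∧ y < x) ⟨x, fun _ hz => hz.2.le⟩ h
  exact ⟨y, hyS, hyx, fun z hz hzS => (hmax z ⟨hzS, hz.2⟩).not_gt hz.1⟩

structure IsSuccCycle (S : Set ℤ) (p : Perm ℤ) : Prop where
  isSuccOn : IsSuccOn S p
  apply_of_notMem : ∀ x ∉ S, p x = x

/-- `u` is `c` on `S` and the identity elsewhere; `c` preserves `S` because it moves each point of
`S` to the next one, and each point of `Sᶜ` to the previous one. -/
theorem exists_isSuccCycle_mul {n : ℕ} (hn : 0 < n) {S : Set ℤ} (hS : IsPeriodicSet n S)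
    {c : Perm ℤ} (hc : IsSuccOn S c) (hc' : IsSuccOn Sᶜ c⁻¹) :
    ∃ u v : Perm ℤ, IsSuccCycle S u ∧ IsSuccCycle Sᶜ v⁻¹ ∧ c = u * v := by
  classical
  have hmaps : ∀ x, c x ∈ S ↔ x ∈ S := by
    intro x
    by_cases hx : x ∈ S
    · obtain ⟨y, hy, hxy, hgap⟩ :=
        exists_succ_mem (x := x) ⟨x + 1 * n, (hS.add_mul_mem_iff x 1).2 hx, by omega⟩
      rw [hc x hx y hy hxy hgap]
      exact iff_of_true hy hx
    · obtain ⟨y, hy, hyx, hgap⟩ :=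
        exists_pred_mem (x := x) ⟨x + -1 * n, (hS.compl.add_mul_mem_iff x (-1)).2 hx, by omega⟩
      have hcx : c x = y := by simp [← hc' y hy x hx hyx hgap]
      rw [hcx]
      exact iff_of_false hy hx
  set u := Perm.ofSubtype (c.subtypePerm hmaps)
  refine ⟨u, u⁻¹ * c, ⟨fun x hx y hy hxy hgap => ?_, fun x hx => ?_⟩,
    ⟨fun x hx y hy hxy hgap => ?_, fun x hx => ?_⟩, (mul_inv_cancel_left u c).symm⟩
  · rw [Perm.ofSubtype_apply_of_mem _ hx]
    exact hc x hx y hy hxy hgap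
  · exact Perm.ofSubtype_apply_of_not_mem _ hx
  · rw [mul_inv_rev, inv_inv, Perm.mul_apply, Perm.ofSubtype_apply_of_not_mem _ hx]
    exact hc' x hx y hy hxy hgap
  · rw [mul_inv_rev, inv_inv, Perm.mul_apply, Perm.ofSubtype_apply_of_mem _ (not_not.1 hx)]
    simp

theorem add_mul_lt_add_mul_iff {n r r' j k : ℤ} (hr : r ∈ Icc 1 n) (hr' : r' ∈ Icc 1 n) :
    r + j * n < r' + k * n ↔ j < k ∨ j = k ∧ r < r' := by
  obtain ⟨hr₁, hr₂⟩ := hr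
  obtain ⟨hr₁', hr₂'⟩ := hr'
  rcases lt_trichotomy j k with h | rfl | h
  · have : (j + 1) * n ≤ k * n := by nlinarith
    constructor <;> intro <;> first | omega | nlinarith
  · omega
  · have : (k + 1) * n ≤ j * n := by nlinarith
    constructor <;> intro <;> first | omega | nlinarith

namespace List

variable {α : Type*} {L : List α} (d : α)

theorem map_range'_getD_sub_one : (range' 1 L.length).map (fun i => L.getD (i - 1) d) = L := by
  refine ext_getElem (by simp) fun i _ hi => ?_
  simp [getElem?_eq_getElem hi]

theorem mem_iff_exists_getD_sub_one {x : α} :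
    x ∈ L ↔ ∃ i, 1 ≤ i ∧ i ≤ L.length ∧ L.getD (i - 1) d = x := by
  conv_lhs => rw [← map_range'_getD_sub_one (L := L) d]
  simp only [mem_map, mem_range'_1]
  constructor
  · rintro ⟨i, ⟨hi₁, hi₂⟩, rfl⟩
    exact ⟨i, hi₁, by omega, rfl⟩
  · rintro ⟨i, hi₁, hi₂, rfl⟩
    exact ⟨i, ⟨hi₁, by omega⟩, rfl⟩

theorem SortedLT.getD_sub_one_lt [Preorder α] (hL : L.SortedLT) {i j : ℕ} (hi : 1 ≤ i)
    (hij : i < j) (hj : j ≤ L.length) : L.getD (i - 1) d < L.getD (j - 1) d := by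
  rw [getD_eq_getElem _ _ (by omega), getD_eq_getElem _ _ (by omega)]
  exact hL.strictMono_get (show (⟨i - 1, by omega⟩ : Fin L.length) < ⟨j - 1, by omega⟩ by
    simp only [Fin.mk_lt_mk]; omega)

end List

open Classical in
noncomputable def residueList (n : ℕ) (S : Set ℤ) : List ℤ :=
  ((Finset.Icc 1 (n : ℤ)).filter (· ∈ S)).sort (· ≤ ·)

section ResidueList

variable {n : ℕ} {S : Set ℤ}

theorem mem_residueList {x : ℤ} : x ∈ residueList n S ↔ x ∈ Icc 1 (n : ℤ) ∧ x ∈ S := by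
  simp [residueList]

theorem sortedLT_residueList : (residueList n S).SortedLT :=
  Finset.sortedLT_sort _

theorem length_residueList_add_length_residueList_compl :
    (residueList n S).length + (residueList n Sᶜ).length = n := by
  classical
  simp only [residueList, Finset.length_sort, mem_compl_iff]
  convert Finset.card_filter_add_card_filter_not (s := Finset.Icc 1 (n : ℤ)) (· ∈ S)
  simp

theorem exists_eq_getElem_residueList_add_mul (hn : 0 < n) (hS : IsPeriodicSet n S) {z : ℤ}
    (hz : z ∈ S) : ∃ m, ∃ hm : m < (residueList n S).length, ∃ k : ℤ,
      z = (residueList n S)[m] + k * n := by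
  have hn' : (0 : ℤ) < n := by exact_mod_cast hn
  have hdiv := Int.emod_add_mul_ediv (z - 1) n
  have hr₁ := Int.emod_nonneg (z - 1) hn'.ne'
  have hr₂ := Int.emod_lt_of_pos (z - 1) hn'
  have hrz : z = (z - 1) % n + 1 + (z - 1) / n * n := by linarith [mul_comm ((z - 1) / n) n]
  have hr : (z - 1) % n + 1 ∈ residueList n S :=
    mem_residueList.2 ⟨⟨by omega, by omega⟩, (hS.add_mul_mem_iff _ ((z - 1) / n)).1 (hrz ▸ hz)⟩
  obtain ⟨m, hm, hmr⟩ := List.mem_iff_getElem.1 hr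
  exact ⟨m, hm, (z - 1) / n, hmr ▸ hrz⟩

theorem length_residueList_pos (hn : 0 < n) (hS : IsPeriodicSet n S) {z : ℤ} (hz : z ∈ S) :
    0 < (residueList n S).length :=
  let ⟨_, hm, _⟩ := exists_eq_getElem_residueList_add_mul hn hS hz
  Nat.zero_lt_of_lt hm

/-- Every point of `S` is a translate of an entry of `residueList n S`, so the successor in `S`
of a translate of an entry is the same translate of the next entry, or the next translate of the
first entry after the last one. -/
theorem isCycleList_residueList (hn : 0 < n) (hS : IsPeriodicSet n S) {p : Perm ℤ}
    (hp : IsSuccCycle S p) : IsCycleList n (residueList n S) 1 p := by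
  set L := residueList n S
  have hmem (m : ℕ) (hm : m < L.length) : L[m] ∈ Icc 1 (n : ℤ) ∧ L[m] ∈ S :=
    mem_residueList.1 (List.getElem_mem hm)
  have htrans (m : ℕ) (hm : m < L.length) (k : ℤ) : L[m] + k * n ∈ S :=
    (hS.add_mul_mem_iff _ k).2 (hmem m hm).2
  have hlex (m m' : ℕ) (hm : m < L.length) (hm' : m' < L.length) (j k : ℤ) :
      L[m] + j * n < L[m'] + k * n ↔ j < k ∨ j = k ∧ m < m' := by
    rw [add_mul_lt_add_mul_iff (hmem m hm).1 (hmem m' hm').1,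
      sortedLT_residueList.getElem_lt_getElem_iff]
  refine ⟨fun i hi k => ?_, fun hL k => ?_, fun x hx => hp.apply_of_notMem x fun hxS => ?_⟩
  · rw [List.getD_eq_getElem _ _ (by omega), List.getD_eq_getElem _ _ hi]
    refine hp.isSuccOn _ (htrans i _ k) _ (htrans (i + 1) hi k)
      ((hlex _ _ _ _ _ _).2 (.inr ⟨rfl, by omega⟩)) fun z hz hzS => ?_
    obtain ⟨m, hm, j, rfl⟩ := exists_eq_getElem_residueList_add_mul hn hS hzS
    have h₁ := (hlex _ _ _ _ _ _).1 hz.1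
    have h₂ := (hlex _ _ _ _ _ _).1 hz.2
    omega
  · have hL' : 0 < L.length := List.length_pos_iff.2 hL
    rw [List.getLast_eq_getElem, List.head_eq_getElem]
    refine hp.isSuccOn _ (htrans _ _ k) _ (htrans 0 hL' (1 + k))
      ((hlex _ _ _ _ _ _).2 (.inl (by omega))) fun z hz hzS => ?_
    obtain ⟨m, hm, j, rfl⟩ := exists_eq_getElem_residueList_add_mul hn hS hzS
    change m < L.length at hm
    have h₁ := (hlex _ _ _ _ _ _).1 hz.1
    have h₂ := (hlex _ _ _ _ _ _).1 hz.2
    omega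
  · obtain ⟨m, hm, k, rfl⟩ := exists_eq_getElem_residueList_add_mul hn hS hxS
    exact hx _ (List.getElem_mem hm) ⟨k, by ring⟩

end ResidueList

theorem IsCycleList.inv_reverse {n : ℕ} {L : List ℤ} {h : ℤ} {w : Perm ℤ}
    (hw : IsCycleList n L h w) : IsCycleList n L.reverse (-h) w⁻¹ := by
  obtain ⟨hnext, hlast, hfix⟩ := hw
  refine ⟨fun i hi k => ?_, fun hL k => ?_, fun x hx => ?_⟩
  · rw [List.length_reverse] at hi
    have := hnext (L.length - 1 - (i + 1)) (by omega) k
    rw [List.getD_eq_getElem _ _ (by omega), List.getD_eq_getElem _ _ (by omega)] at this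
    rw [List.getD_eq_getElem _ _ (by simp; omega), List.getD_eq_getElem _ _ (by simp; omega),
      List.getElem_reverse, List.getElem_reverse, Perm.inv_eq_iff_eq]
    simp only [show L.length - 1 - (i + 1) + 1 = L.length - 1 - i by omega] at this
    exact this.symm
  · rw [List.getLast_reverse, List.head_reverse, Perm.inv_eq_iff_eq,
      hlast (List.reverse_ne_nil_iff.1 hL) (-h + k)]
    ring_nf
  · rw [Perm.inv_eq_iff_eq, hfix x fun a ha => hx a (List.mem_reverse.2 ha)]

open Fin.CommRing in
theorem exists_edge_position {n : ℕ} (hn : 0 < n) (e : Perm (Fin n)) :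
    ∃ E : ℤ → ℕ, (∀ x, E x < n) ∧ ∀ x (j : Fin n), E x = j ↔ (n : ℤ) ∣ x - (e j + 1) := by
  have : NeZero n := ⟨hn.ne'⟩
  refine ⟨fun x => e.symm ((ZMod.finEquiv n).symm ((x - 1 : ℤ) : ZMod n)), fun x => Fin.isLt _,
    fun x j => ?_⟩
  have hcast : ZMod.finEquiv n (e j) = (((e j : ℕ) : ℤ) : ZMod n) := by
    rw [Int.cast_natCast, ← map_natCast (ZMod.finEquiv n), Fin.cast_val_eq_self]
  rw [Fin.val_inj, Equiv.symm_apply_eq, RingEquiv.symm_apply_eq, hcast,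
    ZMod.intCast_eq_intCast_iff_dvd_sub, ← dvd_neg]
  ring_nf

theorem IsCoxeter.exists_word {n : ℕ} (hn : 0 < n) {c : Perm ℤ} (hc : IsCoxeter n c) :
    ∃ (l : List (Perm ℤ)) (E : ℤ → ℕ), l.prod = c ∧ (∀ x, E x < l.length) ∧
      (∀ j (hj : j < l.length), SwapsEdgesAt E j l[j]) ∧
      (∀ x y, (n : ℤ) ∣ x - y → E x = E y) ∧ ∃ x, E x = 0 := by
  obtain ⟨s, hs, e, rfl⟩ := hc
  obtain ⟨E, hEn, hE⟩ := exists_edge_position hn e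
  refine ⟨List.ofFn fun j => s (e j), E, rfl, by simpa using hEn, fun j hj => ?_,
    fun x y hxy => ?_, e ⟨0, hn⟩ + 1, (hE _ ⟨0, hn⟩).2 (by simp)⟩
  · set i : Fin n := ⟨j, by simpa using hj⟩
    rw [List.getElem_ofFn]
    have hsi := hs (e i)
    rw [show ((e i : ℕ) : ℤ) + 2 = (e i : ℕ) + 1 + 1 by ring] at hsi
    exact hsi.swapsEdgesAt fun x => hE x i
  · have hj := (hE x ⟨E x, hEn x⟩).1 rfl
    exact ((hE y ⟨E x, hEn x⟩).2 (by simpa using dvd_sub hj hxy)).symm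

/-- `S` is the set of points whose upper edge comes after their lower edge in the word. -/
theorem IsCoxeter.exists_isSuccOn {n : ℕ} (hn : 0 < n) {c : Perm ℤ} (hc : IsCoxeter n c) :
    ∃ S : Set ℤ, IsPeriodicSet n S ∧ S.Nonempty ∧ Sᶜ.Nonempty ∧
      IsSuccOn S c ∧ IsSuccOn Sᶜ c⁻¹ := by
  obtain ⟨l, E, rfl, hE, hl, hper, x, hx⟩ := hc.exists_word hn
  refine ⟨{x | E (x - 1) < E x}, fun y z hyz => ?_, ⟨x + 1, ?_⟩, ⟨x, ?_⟩,
    isSuccOn_list_prod hl hE, isSuccOn_compl_inv_list_prod hl hE⟩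
  · simp only [mem_ofPred_eq, hper y z hyz, hper (y - 1) (z - 1) (by simpa using hyz)]
  · have := (hl _ (hE (x + 1))).ne rfl
    simp only [mem_ofPred_eq, add_sub_cancel_right, hx] at this ⊢
    omega
  · simp [hx]

theorem statement3 (n : ℕ) (hn : 2 ≤ n) (c : Equiv.Perm ℤ) (hc : IsCoxeter n c) :
    ∃ (s t : ℕ) (a al : ℕ → ℤ),
      1 ≤ s ∧ 1 ≤ t ∧ s + t = n ∧
      (∀ i j, 1 ≤ i → i < j → j ≤ s → a i < a j) ∧
      (∀ i j, 1 ≤ i → i < j → j ≤ t → al i < al j) ∧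
      (∀ i, 1 ≤ i → i ≤ s → 1 ≤ a i ∧ a i ≤ n) ∧
      (∀ i, 1 ≤ i → i ≤ t → 1 ≤ al i ∧ al i ≤ n) ∧
      (∀ i j, 1 ≤ i → i ≤ s → 1 ≤ j → j ≤ t → a i ≠ al j) ∧
      (∀ x : ℤ, 1 ≤ x → x ≤ n →
        (∃ i, 1 ≤ i ∧ i ≤ s ∧ a i = x) ∨ (∃ j, 1 ≤ j ∧ j ≤ t ∧ al j = x)) ∧
      ∃ u v : Equiv.Perm ℤ,
        IsCycleList n ((List.range' 1 s).map a) 1 u ∧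
        IsCycleList n (((List.range' 1 t).map al).reverse) (-1) v ∧
        c = u * v := by
  obtain ⟨S, hS, ⟨x₀, hx₀⟩, ⟨x₁, hx₁⟩, hup, hdown⟩ := hc.exists_isSuccOn (by omega)
  obtain ⟨u, v, hu, hv, rfl⟩ := exists_isSuccCycle_mul (by omega) hS hup hdown
  have hmem {T : Set ℤ} {i : ℕ} (h₁ : 1 ≤ i) (h₂ : i ≤ (residueList n T).length) :
      (residueList n T).getD (i - 1) 0 ∈ Icc 1 (n : ℤ) ∧ (residueList n T).getD (i - 1) 0 ∈ T :=
    mem_residueList.1 ((List.mem_iff_exists_getD_sub_one 0).2 ⟨i, h₁, h₂, rfl⟩)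
  refine ⟨(residueList n S).length, (residueList n Sᶜ).length,
    fun i => (residueList n S).getD (i - 1) 0, fun i => (residueList n Sᶜ).getD (i - 1) 0,
    length_residueList_pos (by omega) hS hx₀, length_residueList_pos (by omega) hS.compl hx₁,
    length_residueList_add_length_residueList_compl,
    fun _ _ => sortedLT_residueList.getD_sub_one_lt 0,
    fun _ _ => sortedLT_residueList.getD_sub_one_lt 0,
    fun _ h₁ h₂ => (hmem h₁ h₂).1, fun _ h₁ h₂ => (hmem h₁ h₂).1,
    fun _ _ hi₁ hi₂ hj₁ hj₂ heq =>
      (hmem hj₁ hj₂).2 (heq.subst (motive := (· ∈ S)) (hmem hi₁ hi₂).2),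
    fun x h₁ h₂ => ?_, u, v, ?_, ?_, rfl⟩
  · by_cases hx : x ∈ S
    · exact .inl ((List.mem_iff_exists_getD_sub_one 0).1 (mem_residueList.2 ⟨⟨h₁, h₂⟩, hx⟩))
    · exact .inr ((List.mem_iff_exists_getD_sub_one 0).1 (mem_residueList.2 ⟨⟨h₁, h₂⟩, hx⟩))
  · rw [List.map_range'_getD_sub_one]
    exact isCycleList_residueList (by omega) hS hu
  · rw [List.map_range'_getD_sub_one]
    simpa using (isCycleList_residueList (by omega) hS.compl hv).inv_reverse
end

section
/- Let G be a group, R ⊆ G a subset generating G as a monoid, and c ∈ G a balanced element; let P_c and M(P_c) be as above. Then every element of M(P_c) left-divides some power of ⟨c⟩: for every m ∈ M(P_c) there exist k ∈ ℕ and m' ∈ M(P_c) with m·m' = ⟨c⟩^k. -/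
/-!
If every generator `s` of a monoid has a complement `u` among the generators with `s * u = C`,
then `s * C = s * u * u' = C * u'`, so left multiplication by a generator can be pushed past any
power of `C` at the cost of replacing the generator by another one. Inducting on a word in the
generators, each new letter is absorbed by one more factor `C`. In the dual monoid `M(P_c)` the
complement of `⟨w⟩` is `⟨w⁻¹ c⟩`: balancedness makes `w⁻¹ c` a divisor of `c` as well.
-/

variable {G : Type*} [Group G]

/-- The length `l_R` of `g` with respect to the generating set `R`. -/
noncomputable def genLength (R : Set G) (g : G) : ℕ :=
  sInf {m | ∃ L : List G, L.length = m ∧ (∀ x ∈ L, x ∈ R) ∧ L.prod = g}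

/-- `h` left-divides `g` (with respect to the length `l_R`). -/
def LeftDvd (R : Set G) (h g : G) : Prop :=
  ∃ h' : G, g = h * h' ∧ genLength R g = genLength R h + genLength R h'

/-- `h` right-divides `g` (with respect to the length `l_R`). -/
def GRightDvd (R : Set G) (h g : G) : Prop :=
  ∃ h' : G, g = h' * h ∧ genLength R g = genLength R h' + genLength R h

/-- `c` is balanced : its left and right divisors coincide. -/
def GBalanced (R : Set G) (c : G) : Prop :=
  ∀ h : G, LeftDvd R h c ↔ GRightDvd R h c

/-- The set `P_c` of divisors of `c`. -/
def DivSet (R : Set G) (c : G) : Set G := {h | LeftDvd R h c}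

/-- The defining relations of the dual monoid `M(P_c)`. -/
def DualRel (R : Set G) (c : G) :
    FreeMonoid (DivSet R c) → FreeMonoid (DivSet R c) → Prop := fun x y =>
  ∃ (w w' : DivSet R c) (h : (w : G) * (w' : G) ∈ DivSet R c),
    genLength R ((w : G) * (w' : G)) = genLength R (w : G) + genLength R (w' : G) ∧
    x = FreeMonoid.of w * FreeMonoid.of w' ∧
    y = FreeMonoid.of (⟨(w : G) * (w' : G), h⟩ : DivSet R c)

/-- The dual monoid `M(P_c)`. -/
abbrev DualMonoid (R : Set G) (c : G) := (conGen (DualRel R c)).Quotient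

/-- The generator `⟨w⟩` of the dual monoid `M(P_c)`. -/
def dualGen (R : Set G) (c : G) (w : DivSet R c) : DualMonoid R c :=
  (conGen (DualRel R c)).mk' (FreeMonoid.of w)

theorem genLength_one (R : Set G) : genLength R (1 : G) = 0 :=
  Nat.sInf_eq_zero.2 (Or.inl ⟨[], rfl, by simp, rfl⟩)

theorem c_mem_DivSet (R : Set G) (c : G) : c ∈ DivSet R c :=
  ⟨1, (mul_one c).symm, by rw [genLength_one, Nat.add_zero]⟩

section ComplementedGenerators

variable {M : Type*} [Monoid M] {S : Set M} {C : M}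

theorem exists_mem_mul_pow_eq_pow_mul (hS : ∀ s ∈ S, ∃ u ∈ S, s * u = C) (k : ℕ) :
    ∀ s ∈ S, ∃ t ∈ S, s * C ^ k = C ^ k * t := by
  induction k with
  | zero => exact fun s hs => ⟨s, hs, by simp⟩
  | succ k ih =>
    intro s hs
    obtain ⟨u, hu, hsu⟩ := hS s hs
    obtain ⟨u', hu', huu'⟩ := hS u hu
    obtain ⟨t, ht, hpush⟩ := ih u' hu'
    refine ⟨t, ht, ?_⟩
    calc s * C ^ (k + 1) = s * (u * u') * C ^ k := by rw [huu', pow_succ', mul_assoc]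
      _ = C * (u' * C ^ k) := by rw [← mul_assoc, hsu, mul_assoc]
      _ = C ^ (k + 1) * t := by rw [hpush, pow_succ', mul_assoc]

theorem exists_mul_eq_pow_of_closure_eq_top (hgen : Submonoid.closure S = ⊤)
    (hS : ∀ s ∈ S, ∃ u ∈ S, s * u = C) (m : M) : ∃ (k : ℕ) (m' : M), m * m' = C ^ k := by
  have hm : m ∈ Submonoid.closure S := hgen ▸ Submonoid.mem_top m
  induction hm using Submonoid.closure_induction_left with
  | one => exact ⟨0, 1, by simp⟩
  | mul_left s hs m _ ih =>
    obtain ⟨k, m', hm'⟩ := ih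
    obtain ⟨t, ht, hpush⟩ := exists_mem_mul_pow_eq_pow_mul hS k s hs
    obtain ⟨v, -, htv⟩ := hS t ht
    refine ⟨k + 1, m' * v, ?_⟩
    rw [mul_assoc, ← mul_assoc m, hm', ← mul_assoc, hpush, mul_assoc, htv, pow_succ]

end ComplementedGenerators

theorem genLength_eq_add_inv_mul {R : Set G} {c w : G} (hw : w ∈ DivSet R c) :
    genLength R c = genLength R w + genLength R (w⁻¹ * c) := by
  obtain ⟨h', rfl, hlen⟩ := hw
  rwa [inv_mul_cancel_left]

theorem GBalanced.inv_mul_mem_divSet {R : Set G} {c w : G} (hbal : GBalanced R c)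
    (hw : w ∈ DivSet R c) : w⁻¹ * c ∈ DivSet R c :=
  (hbal _).2 ⟨w, (mul_inv_cancel_left w c).symm, genLength_eq_add_inv_mul hw⟩

theorem dualGen_mul_dualGen (R : Set G) (c : G) (w w' : DivSet R c)
    (h : (w : G) * (w' : G) ∈ DivSet R c)
    (hlen : genLength R ((w : G) * (w' : G)) = genLength R (w : G) + genLength R (w' : G)) :
    dualGen R c w * dualGen R c w' = dualGen R c ⟨(w : G) * (w' : G), h⟩ :=
  PresentedMonoid.mk_eq_mk_of_rel ⟨w, w', h, hlen, rfl, rfl⟩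

theorem exists_dualGen_mul_eq_dualGen_self {R : Set G} {c : G} (hbal : GBalanced R c)
    (w : DivSet R c) : ∃ u, dualGen R c w * dualGen R c u = dualGen R c ⟨c, c_mem_DivSet R c⟩ := by
  have hmem := hbal.inv_mul_mem_divSet w.2
  have hprod : (w : G) * ((w : G)⁻¹ * c) = c := mul_inv_cancel_left _ _
  refine ⟨⟨_, hmem⟩, ?_⟩
  rw [dualGen_mul_dualGen R c w ⟨_, hmem⟩ (by rw [hprod]; exact c_mem_DivSet R c)
    (by rw [hprod]; exact genLength_eq_add_inv_mul w.2)]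
  congr 1
  exact Subtype.ext hprod

theorem closure_range_dualGen (R : Set G) (c : G) :
    Submonoid.closure (Set.range (dualGen R c)) = ⊤ :=
  PresentedMonoid.closure_range_of _

theorem statement9_general {G : Type*} [Group G] (R : Set G)
    (c : G) (hbal : GBalanced R c) :
    ∀ m : DualMonoid R c, ∃ (k : ℕ) (m' : DualMonoid R c),
      m * m' = (dualGen R c ⟨c, c_mem_DivSet R c⟩) ^ k := by
  refine exists_mul_eq_pow_of_closure_eq_top (closure_range_dualGen R c) ?_
  rintro _ ⟨w, rfl⟩
  obtain ⟨u, hu⟩ := exists_dualGen_mul_eq_dualGen_self hbal w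
  exact ⟨_, ⟨u, rfl⟩, hu⟩

theorem statement9 {G : Type*} [Group G] (R : Set G)
    (hgen : Submonoid.closure R = ⊤) (c : G) (hbal : GBalanced R c) :
    ∀ m : DualMonoid R c, ∃ (k : ℕ) (m' : DualMonoid R c),
      m * m' = (dualGen R c ⟨c, c_mem_DivSet R c⟩) ^ k :=
  statement9_general R c hbal
end

section
/- Let n ≥ 3, let c be a Coxeter element of W, and let G(P_c) be the group presented by generators ⟨w⟩ for w ∈ P_c and relations ⟨w⟩·⟨w'⟩ = ⟨w w'⟩ whenever w, w', w w' ∈ P_c and l_R(w w') = l_R(w) + l_R(w'). Then there is a group homomorphism from the Artin–Tits group B(Ã_{n−1}) to G(P_c) sending σ_i to ⟨s_i⟩ for i = 1,…,n. -/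
/-- The defining relations of the Artin–Tits group of type `Ã_{n-1}` :
braid relations `σ_i σ_j σ_i = σ_j σ_i σ_j` for cyclically adjacent indices and
commutation relations `σ_i σ_j = σ_j σ_i` for non-adjacent ones. -/
def affineBraidRels (n : ℕ) : Set (FreeGroup (Fin n)) :=
  {x | ∃ i j : Fin n, ((i : ℕ) + 1) % n = (j : ℕ) ∧
      x = FreeGroup.of i * FreeGroup.of j * FreeGroup.of i *
        (FreeGroup.of j * FreeGroup.of i * FreeGroup.of j)⁻¹} ∪
  {x | ∃ i j : Fin n, ((i : ℕ) + 1) % n ≠ (j : ℕ) ∧ ((j : ℕ) + 1) % n ≠ (i : ℕ) ∧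
      x = FreeGroup.of i * FreeGroup.of j * (FreeGroup.of j * FreeGroup.of i)⁻¹}

/-- The Artin–Tits group `B(Ã_{n-1})`. -/
abbrev AffineBraidGroup (n : ℕ) := PresentedGroup (affineBraidRels n)

/-- The set `P_c` of divisors of `c` in `W`. -/
def PcW (n : ℕ) (c : Equiv.Perm ℤ) : Set (Equiv.Perm ℤ) := {w | RDvd n w c}

/-- The defining relations of the group of fractions `G(P_c)` of the dual monoid. -/
def dualGroupRels (n : ℕ) (c : Equiv.Perm ℤ) : Set (FreeGroup (PcW n c)) :=
  {x | ∃ (w w' : PcW n c) (h : (w : Equiv.Perm ℤ) * (w' : Equiv.Perm ℤ) ∈ PcW n c),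
    reflLength n ((w : Equiv.Perm ℤ) * (w' : Equiv.Perm ℤ)) =
      reflLength n (w : Equiv.Perm ℤ) + reflLength n (w' : Equiv.Perm ℤ) ∧
    x = FreeGroup.of w * FreeGroup.of w' *
      (FreeGroup.of (⟨(w : Equiv.Perm ℤ) * (w' : Equiv.Perm ℤ), h⟩ : PcW n c))⁻¹}

/-- The group `G(P_c)`, presented by generators `⟨w⟩`, `w ∈ P_c`. -/
abbrev DualGroup (n : ℕ) (c : Equiv.Perm ℤ) := PresentedGroup (dualGroupRels n c)

/-!
The homomorphism is `σ_i ↦ ⟨s_i⟩`, so the point is that the `⟨s_i⟩` satisfy the Artin relations.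
Everything rests on `l_R(c) = n`. Then, by Hurwitz moves, every subword of the word
`c = s_{e 0} ⋯ s_{e (n-1)}` divides `c` and has length its number of letters. So for `i ≠ j`,
taken in their order in `c`, we get `⟨s_i⟩⟨s_j⟩ = ⟨s_i s_j⟩`, which is symmetric when `s_i` and
`s_j` commute; for adjacent `i, j` also `t = s_i s_j s_i ≼ c`, and both sides of the braid
relation equal `⟨s_j⟩⟨t⟩⟨s_i⟩`.

For `l_R(c) ≥ n`, write `c = r_1 ⋯ r_m` with `r_k = (a_k, b_k)`. The edges `{a_k, b_k}` leave at
least `n - m` components on `ℤ/n`. Each component `S` is preserved by every `r_k`, and the total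
displacement `∑_{x ∈ S} (w x - x)` is additive and vanishes on the `r_k`, hence on `c`. But `c`
moves the class `v` to the right or to the left according as the letter `(v - 1, v)` comes before
or after `(v, v + 1)` in the word, and it permutes the right-moving classes cyclically, and the
left-moving ones too; so a nonempty `c`-stable union of classes with zero displacement is
everything. Thus `m ≥ n - 1`, and the sign of the permutation induced on `ℤ/n` gives
`m ≡ n (mod 2)`.
-/

open Equiv

variable {n : ℕ}

lemma intCast_eq_intCast_iff_dvd {x a : ℤ} : (x : ZMod n) = a ↔ (n : ℤ) ∣ x - a :=
  eq_comm.trans (ZMod.intCast_eq_intCast_iff_dvd_sub a x n)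

lemma intCast_val_cast [NeZero n] (v : ZMod n) : ((v.val : ℤ) : ZMod n) = v := by simp

namespace IsPeriodic

variable {w v : Perm ℤ}

lemma add_mul_self (hw : IsPeriodic n w) (x k : ℤ) : w (x + k * n) = w x + k * n := by
  induction k using Int.induction_on with
  | zero => simp
  | succ k ih => rw [add_one_mul, ← add_assoc, hw, ih]; ring
  | pred k ih =>
    have := hw (x + (-(k : ℤ) - 1) * n)
    rw [show x + (-(k : ℤ) - 1) * n + n = x + -(k : ℤ) * n by ring, ih] at this
    linear_combination -this

lemma apply_congr (hw : IsPeriodic n w) {x y : ℤ} (h : (x : ZMod n) = y) :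
    w x = w y + (x - y) := by
  obtain ⟨k, hk⟩ := intCast_eq_intCast_iff_dvd.mp h
  rw [show x = y + k * n by linear_combination hk, hw.add_mul_self]
  ring

lemma intCast_apply_congr (hw : IsPeriodic n w) {x y : ℤ} (h : (x : ZMod n) = y) :
    (w x : ZMod n) = w y := by
  rw [hw.apply_congr h]
  push_cast
  rw [h, sub_self, add_zero]

lemma sub_congr (hw : IsPeriodic n w) {x y : ℤ} (h : (x : ZMod n) = y) :
    w x - x = w y - y := by
  rw [hw.apply_congr h]
  ring

lemma one : IsPeriodic n (1 : Perm ℤ) := fun _ => rfl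

lemma mul_s12 (hw : IsPeriodic n w) (hv : IsPeriodic n v) : IsPeriodic n (w * v) := fun x => by
  simp only [Perm.mul_apply, hv x, hw (v x)]

lemma inv_s12 (hw : IsPeriodic n w) : IsPeriodic n w⁻¹ := fun x =>
  w.injective (by rw [hw]; simp only [Perm.coe_inv, Equiv.apply_symm_apply])

end IsPeriodic

def periodicSubgroup (n : ℕ) : Subgroup (Perm ℤ) where
  carrier := {w | IsPeriodic n w}
  mul_mem' := IsPeriodic.mul_s12
  one_mem' := IsPeriodic.one
  inv_mem' := IsPeriodic.inv_s12

namespace IsTransposition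

variable {a b a' b' : ℤ} {w w' : Perm ℤ}

lemma apply_of_intCast_eq_left (h : IsTransposition n a b w) {x : ℤ} (hx : (x : ZMod n) = a) :
    w x = b + (x - a) := by
  obtain ⟨k, hk⟩ := intCast_eq_intCast_iff_dvd.mp hx
  rw [show x = a + k * n by linear_combination hk, h.1 k]
  ring

lemma apply_of_intCast_eq_right (h : IsTransposition n a b w) {x : ℤ} (hx : (x : ZMod n) = b) :
    w x = a + (x - b) := by
  obtain ⟨k, hk⟩ := intCast_eq_intCast_iff_dvd.mp hx
  rw [show x = b + k * n by linear_combination hk, h.2.1 k]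
  ring

lemma apply_of_intCast_ne (h : IsTransposition n a b w) {x : ℤ} (ha : (x : ZMod n) ≠ a)
    (hb : (x : ZMod n) ≠ b) : w x = x :=
  h.2.2 x (mt intCast_eq_intCast_iff_dvd.mpr ha) (mt intCast_eq_intCast_iff_dvd.mpr hb)

lemma apply_left (h : IsTransposition n a b w) : w a = b := by
  simpa using h.1 0

lemma apply_right (h : IsTransposition n a b w) : w b = a := by
  simpa using h.2.1 0

lemma periodic (h : IsTransposition n a b w) : IsPeriodic n w := fun x => by
  have hx : ((x + n : ℤ) : ZMod n) = x := by simp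
  by_cases ha : (x : ZMod n) = a
  · rw [h.apply_of_intCast_eq_left ha, h.apply_of_intCast_eq_left (hx.trans ha)]; ring
  by_cases hb : (x : ZMod n) = b
  · rw [h.apply_of_intCast_eq_right hb, h.apply_of_intCast_eq_right (hx.trans hb)]; ring
  rw [h.apply_of_intCast_ne ha hb, h.apply_of_intCast_ne (hx ▸ ha) (hx ▸ hb)]

lemma mul_self (h : IsTransposition n a b w) : w * w = 1 := by
  ext x
  simp only [Perm.mul_apply, Perm.one_apply]
  by_cases ha : (x : ZMod n) = a
  · have hb : ((b + (x - a) : ℤ) : ZMod n) = b := by push_cast; rw [ha]; ring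
    rw [h.apply_of_intCast_eq_left ha, h.apply_of_intCast_eq_right hb]
    ring
  by_cases hb : (x : ZMod n) = b
  · have ha : ((a + (x - b) : ℤ) : ZMod n) = a := by push_cast; rw [hb]; ring
    rw [h.apply_of_intCast_eq_right hb, h.apply_of_intCast_eq_left ha]
    ring
  rw [h.apply_of_intCast_ne ha hb, h.apply_of_intCast_ne ha hb]

lemma inv_eq (h : IsTransposition n a b w) : w⁻¹ = w :=
  inv_eq_of_mul_eq_one_right h.mul_self

lemma unique (h : IsTransposition n a b w) (h' : IsTransposition n a b w') :
    w = w' := by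
  ext x
  by_cases ha : (x : ZMod n) = a
  · rw [h.apply_of_intCast_eq_left ha, h'.apply_of_intCast_eq_left ha]
  by_cases hb : (x : ZMod n) = b
  · rw [h.apply_of_intCast_eq_right hb, h'.apply_of_intCast_eq_right hb]
  rw [h.apply_of_intCast_ne ha hb, h'.apply_of_intCast_ne ha hb]

lemma of_intCast_eq (h : IsTransposition n a b w) {a' : ℤ} (ha : (a' : ZMod n) = a) :
    IsTransposition n a' (a' + (b - a)) w := by
  have hw := h.periodic
  have hb : ((a' + (b - a) : ℤ) : ZMod n) = b := by push_cast; rw [ha]; ring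
  refine ⟨fun k => ?_, fun k => ?_, fun x hxa hxb => h.apply_of_intCast_ne ?_ ?_⟩
  · rw [hw.add_mul_self, hw.apply_congr ha, h.apply_left]; ring
  · rw [hw.add_mul_self, hw.apply_congr hb, h.apply_right]; ring
  · rw [← ha]; exact mt intCast_eq_intCast_iff_dvd.mp hxa
  · rw [← hb]; exact mt intCast_eq_intCast_iff_dvd.mp hxb

lemma conj (h : IsTransposition n a b w) {g : Perm ℤ} (hg : IsPeriodic n g) :
    IsTransposition n (g a) (g b) (g * w * g⁻¹) := by
  have hg' := hg.inv_s12
  refine ⟨fun k => ?_, fun k => ?_, fun x hxa hxb => ?_⟩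
  · simp only [Perm.mul_apply]
    rw [hg'.add_mul_self]
    simp [h.1 k, hg.add_mul_self]
  · simp only [Perm.mul_apply]
    rw [hg'.add_mul_self]
    simp [h.2.1 k, hg.add_mul_self]
  · have hxa' : ((g⁻¹ x : ℤ) : ZMod n) ≠ a := fun hc => hxa <| intCast_eq_intCast_iff_dvd.mp
      (by simpa using hg.intCast_apply_congr hc)
    have hxb' : ((g⁻¹ x : ℤ) : ZMod n) ≠ b := fun hc => hxb <| intCast_eq_intCast_iff_dvd.mp
      (by simpa using hg.intCast_apply_congr hc)
    simp only [Perm.mul_apply, h.apply_of_intCast_ne hxa' hxb']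
    simp

lemma commute (h : IsTransposition n a b w) (h' : IsTransposition n a' b' w')
    (h1 : (a' : ZMod n) ≠ a) (h2 : (a' : ZMod n) ≠ b) (h3 : (b' : ZMod n) ≠ a)
    (h4 : (b' : ZMod n) ≠ b) : w * w' = w' * w := by
  have hconj := h'.conj h.periodic
  rw [h.apply_of_intCast_ne h1 h2, h.apply_of_intCast_ne h3 h4, h.inv_eq] at hconj
  calc w * w' = w * w' * w * w := by rw [mul_assoc _ w w, h.mul_self, mul_one]
    _ = w' * w := by rw [hconj.unique h']

lemma braid (htwo : (2 : ZMod n) ≠ 0) (h : IsTransposition n a (a + 1) w)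
    (h' : IsTransposition n (a + 1) (a + 2) w') : w * w' * w = w' * w * w' := by
  have hone : (1 : ZMod n) ≠ 0 := fun h1 => htwo (by rw [← one_add_one_eq_two, h1, add_zero])
  have hconj := h'.conj h.periodic
  have hconj' := h.conj h'.periodic
  rw [h.apply_right, h.apply_of_intCast_ne (by push_cast; simpa using htwo)
    (by push_cast; simpa [add_assoc, one_add_one_eq_two.symm] using hone), h.inv_eq] at hconj
  rw [h'.apply_left, h'.apply_of_intCast_ne (by simpa using hone)
    (by push_cast; simpa [eq_comm] using htwo), h'.inv_eq] at hconj'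
  exact hconj.unique hconj'

end IsTransposition

namespace IsReflection

variable {r : Perm ℤ}

lemma periodic (h : IsReflection n r) : IsPeriodic n r := by
  obtain ⟨_, _, _, hr⟩ := h
  exact hr.periodic

lemma mul_self (h : IsReflection n r) : r * r = 1 := by
  obtain ⟨_, _, _, hr⟩ := h
  exact hr.mul_self

lemma conj (h : IsReflection n r) {g : Perm ℤ} (hg : IsPeriodic n g) :
    IsReflection n (g * r * g⁻¹) := by
  obtain ⟨a, b, hab, hr⟩ := h
  refine ⟨g a, g b, fun hd => hab ?_, hr.conj hg⟩
  rw [← intCast_eq_intCast_iff_dvd] at hd ⊢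
  simpa using hg.inv_s12.intCast_apply_congr hd

end IsReflection

def IsReflProduct (n : ℕ) (w : Perm ℤ) (m : ℕ) : Prop :=
  ∃ L : List (Perm ℤ), L.length = m ∧ (∀ r ∈ L, IsReflection n r) ∧ L.prod = w

namespace IsReflProduct

variable {w v : Perm ℤ} {m k : ℕ}

lemma reflLength_le (h : IsReflProduct n w m) : reflLength n w ≤ m :=
  Nat.sInf_le h

lemma reflLength (h : IsReflProduct n w m) : IsReflProduct n w (reflLength n w) :=
  Nat.sInf_mem (s := {m | IsReflProduct n w m}) ⟨m, h⟩

lemma one : IsReflProduct n 1 0 := ⟨[], rfl, by simp, rfl⟩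

lemma of_isReflection {r : Perm ℤ} (h : IsReflection n r) : IsReflProduct n r 1 :=
  ⟨[r], rfl, by simpa using h, by simp⟩

lemma mul_s12 (hw : IsReflProduct n w m) (hv : IsReflProduct n v k) :
    IsReflProduct n (w * v) (m + k) := by
  obtain ⟨L, rfl, hL, rfl⟩ := hw
  obtain ⟨L', rfl, hL', rfl⟩ := hv
  exact ⟨L ++ L', List.length_append, by simpa [or_imp, forall_and] using ⟨hL, hL'⟩,
    List.prod_append⟩

lemma periodic (h : IsReflProduct n w m) : IsPeriodic n w := by
  obtain ⟨L, -, hL, rfl⟩ := h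
  induction L with
  | nil => exact IsPeriodic.one
  | cons r L ih =>
    simp only [List.mem_cons, forall_eq_or_imp] at hL
    exact hL.1.periodic.mul_s12 (ih hL.2)

end IsReflProduct

lemma reflLength_mul_le {u v : Perm ℤ} {a b : ℕ} (hu : IsReflProduct n u a)
    (hv : IsReflProduct n v b) : reflLength n (u * v) ≤ reflLength n u + reflLength n v :=
  (hu.reflLength.mul_s12 hv.reflLength).reflLength_le

/-- Hurwitz-type moves: the letters outside a sublist can be conjugated to the right end. -/
lemma exists_prod_eq_mul_of_sublist {L L' : List (Perm ℤ)} (hL : ∀ r ∈ L, IsReflection n r)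
    (h : L'.Sublist L) : ∃ v, IsReflProduct n v (L.length - L'.length) ∧ L.prod = L'.prod * v := by
  induction h with
  | slnil => exact ⟨1, IsReflProduct.one, by simp⟩
  | @cons L' l a h ih =>
    simp only [List.mem_cons, forall_eq_or_imp] at hL
    obtain ⟨v, hv, hl⟩ := ih hL.2
    have hg : IsPeriodic n L'.prod⁻¹ :=
      (IsReflProduct.periodic ⟨L', rfl, fun r hr => hL.2 r (h.subset hr), rfl⟩).inv_s12
    refine ⟨L'.prod⁻¹ * a * L'.prod⁻¹⁻¹ * v, ?_, ?_⟩
    · have := (IsReflProduct.of_isReflection (hL.1.conj hg)).mul_s12 hv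
      rwa [List.length_cons, show l.length + 1 - L'.length = 1 + (l.length - L'.length) by
        have := h.length_le; omega]
    · rw [List.prod_cons, hl]
      group
  | @cons_cons L' l a h ih =>
    simp only [List.mem_cons, forall_eq_or_imp] at hL
    obtain ⟨v, hv, hl⟩ := ih hL.2
    exact ⟨v, by simpa using hv, by rw [List.prod_cons, List.prod_cons, hl, mul_assoc]⟩

lemma mem_PcW_of_eq_mul {c u v : Perm ℤ} {a b : ℕ} (hu : IsReflProduct n u a)
    (hv : IsReflProduct n v b) (hc : c = u * v) (hab : a + b ≤ reflLength n c) :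
    u ∈ PcW n c ∧ reflLength n u = a := by
  have hvc : u⁻¹ * c = v := by rw [hc, inv_mul_cancel_left]
  have := reflLength_mul_le hu hv
  have := hu.reflLength_le
  have := hv.reflLength_le
  rw [← hc] at *
  refine ⟨?_, by omega⟩
  show reflLength n c = reflLength n u + reflLength n (u⁻¹ * c)
  rw [hvc]
  omega

lemma mem_PcW_of_sublist {L L' : List (Perm ℤ)} (hL : ∀ r ∈ L, IsReflection n r)
    (hlen : reflLength n L.prod = L.length) (h : L'.Sublist L) :
    L'.prod ∈ PcW n L.prod ∧ reflLength n L'.prod = L'.length := by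
  obtain ⟨v, hv, hLv⟩ := exists_prod_eq_mul_of_sublist hL h
  exact mem_PcW_of_eq_mul ⟨L', rfl, fun r hr => hL r (h.subset hr), rfl⟩ hv hLv
    (by have := h.length_le; omega)

def residueClasses (S : Finset (ZMod n)) : Set ℤ := {x | (x : ZMod n) ∈ S}

def shiftOn (S : Finset (ZMod n)) (w : Perm ℤ) : ℤ := ∑ v ∈ S, (w (v.val : ℤ) - v.val)

lemma shiftOn_one {S : Finset (ZMod n)} : shiftOn S 1 = 0 := by simp [shiftOn]

section Residues

variable [NeZero n]

def residuePerm (n : ℕ) [NeZero n] : periodicSubgroup n →* Perm (ZMod n) where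
  toFun w :=
    { toFun := fun v => ((w : Perm ℤ) (v.val : ℤ) : ZMod n)
      invFun := fun v => ((w⁻¹ : Perm ℤ) (v.val : ℤ) : ZMod n)
      left_inv := fun v => by
        dsimp only
        rw [w.2.inv_s12.intCast_apply_congr (intCast_val_cast _), Perm.coe_inv, Equiv.symm_apply_apply,
          intCast_val_cast]
      right_inv := fun v => by
        dsimp only
        rw [w.2.intCast_apply_congr (intCast_val_cast _), Perm.coe_inv, Equiv.apply_symm_apply,
          intCast_val_cast] }
  map_one' := by ext v; simp
  map_mul' w v := by
    ext u
    simp only [Subgroup.coe_mul, Perm.mul_apply, Equiv.coe_fn_mk]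
    rw [w.2.intCast_apply_congr (intCast_val_cast _)]

lemma residuePerm_intCast (w : periodicSubgroup n) (x : ℤ) :
    residuePerm n w x = ((w : Perm ℤ) x : ZMod n) :=
  w.2.intCast_apply_congr (intCast_val_cast _)

lemma residuePerm_of_isTransposition {a b : ℤ} {r : Perm ℤ} (h : IsTransposition n a b r) :
    residuePerm n ⟨r, h.periodic⟩ = swap (a : ZMod n) b := by
  ext v
  obtain ⟨x, rfl⟩ := ZMod.intCast_surjective v
  rw [residuePerm_intCast]
  by_cases ha : (x : ZMod n) = a
  · rw [h.apply_of_intCast_eq_left ha, ha, swap_apply_left]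
    push_cast
    rw [ha, sub_self, add_zero]
  by_cases hb : (x : ZMod n) = b
  · rw [h.apply_of_intCast_eq_right hb, hb, swap_apply_right]
    push_cast
    rw [hb, sub_self, add_zero]
  rw [h.apply_of_intCast_ne ha hb, swap_apply_of_ne_of_ne ha hb]

lemma sign_residuePerm {w : Perm ℤ} {m : ℕ} (h : IsReflProduct n w m) :
    Perm.sign (residuePerm n ⟨w, h.periodic⟩) = (-1) ^ m := by
  obtain ⟨L, rfl, hL, rfl⟩ := h
  suffices ∀ hw : IsPeriodic n L.prod,
      Perm.sign (residuePerm n ⟨L.prod, hw⟩) = (-1) ^ L.length from this _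
  induction L with
  | nil => intro _; show Perm.sign (residuePerm n 1) = 1; simp
  | cons r L ih =>
    intro hw
    simp only [List.mem_cons, forall_eq_or_imp] at hL
    obtain ⟨a, b, hab, hr⟩ := hL.1
    have hLp : IsPeriodic n L.prod := IsReflProduct.periodic ⟨L, rfl, hL.2, rfl⟩
    rw [show (⟨(r :: L).prod, hw⟩ : periodicSubgroup n) = ⟨r, hr.periodic⟩ * ⟨L.prod, hLp⟩ from
      Subtype.ext List.prod_cons, map_mul, map_mul, ih hL.2, residuePerm_of_isTransposition hr,
      Perm.sign_swap (mt intCast_eq_intCast_iff_dvd.mp hab), List.length_cons, pow_succ']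

lemma even_add_of_isReflProduct {w : Perm ℤ} {m k : ℕ} (hm : IsReflProduct n w m)
    (hk : IsReflProduct n w k) : Even (m + k) := by
  have hsign := (sign_residuePerm hm).symm.trans (sign_residuePerm hk)
  rw [← neg_one_pow_eq_one_iff_even (R := ℤˣ) (by decide), pow_add, hsign, Int.units_mul_self]

variable {S : Finset (ZMod n)} {w v : Perm ℤ}

lemma map_residuePerm_eq (hv : IsPeriodic n v)
    (hS : Set.MapsTo v (residueClasses S) (residueClasses S)) :
    S.map (residuePerm n ⟨v, hv⟩).toEmbedding = S := by
  refine Finset.map_eq_of_subset fun _ hu => ?_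
  obtain ⟨u, huS, rfl⟩ := Finset.mem_map.mp hu
  obtain ⟨x, rfl⟩ := ZMod.intCast_surjective u
  rw [Equiv.toEmbedding_apply, residuePerm_intCast]
  exact hS huS

lemma Set.MapsTo.residueClasses_inv (hv : IsPeriodic n v)
    (hS : Set.MapsTo v (residueClasses S) (residueClasses S)) :
    Set.MapsTo ⇑(v⁻¹) (residueClasses S) (residueClasses S) := fun x hx => by
  rw [← map_residuePerm_eq hv hS] at hx
  obtain ⟨u, hu, hux⟩ := Finset.mem_map.mp hx
  obtain ⟨y, rfl⟩ := ZMod.intCast_surjective u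
  rw [Equiv.toEmbedding_apply, residuePerm_intCast] at hux
  show ((v⁻¹ x : ℤ) : ZMod n) ∈ S
  rw [hv.inv_s12.intCast_apply_congr hux.symm]
  simpa using hu

lemma shiftOn_mul (hw : IsPeriodic n w) (hv : IsPeriodic n v)
    (hS : Set.MapsTo v (residueClasses S) (residueClasses S)) :
    shiftOn S (w * v) = shiftOn S w + shiftOn S v := by
  set π := residuePerm n ⟨v, hv⟩
  have hterm :
      ∀ u : ZMod n, w (v (u.val : ℤ)) - v (u.val : ℤ) = w ((π u).val : ℤ) - (π u).val :=
    fun u => hw.sub_congr (by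
      rw [intCast_val_cast]
      conv_rhs => rw [← intCast_val_cast (n := n) u]
      exact (residuePerm_intCast (n := n) ⟨v, hv⟩ _).symm)
  have hperm : ∑ u ∈ S, (w ((π u).val : ℤ) - (π u).val) = ∑ u ∈ S, (w (u.val : ℤ) - u.val) := by
    conv_rhs => rw [← map_residuePerm_eq hv hS]
    rw [Finset.sum_map]
    rfl
  unfold shiftOn
  rw [← hperm, ← Finset.sum_add_distrib]
  refine Finset.sum_congr rfl fun u _ => ?_
  rw [Perm.mul_apply, ← hterm]
  ring

lemma shiftOn_inv (hv : IsPeriodic n v)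
    (hS : Set.MapsTo v (residueClasses S) (residueClasses S)) :
    shiftOn S v⁻¹ = -shiftOn S v := by
  have := shiftOn_mul hv.inv_s12 hv hS
  rw [inv_mul_cancel, shiftOn_one] at this
  linarith

lemma shiftOn_eq_zero_of_mul_self (hv : IsPeriodic n v) (hv2 : v * v = 1)
    (hS : Set.MapsTo v (residueClasses S) (residueClasses S)) : shiftOn S v = 0 := by
  have := shiftOn_mul hv hv hS
  rw [hv2, shiftOn_one] at this
  linarith

lemma IsTransposition.mapsTo_residueClasses {a b : ℤ} {r : Perm ℤ} (h : IsTransposition n a b r)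
    (hS : (a : ZMod n) ∈ S ↔ (b : ZMod n) ∈ S) :
    Set.MapsTo r (residueClasses S) (residueClasses S) := fun x (hx : (x : ZMod n) ∈ S) => by
  show ((r x : ℤ) : ZMod n) ∈ S
  rw [← residuePerm_intCast ⟨r, h.periodic⟩, residuePerm_of_isTransposition h, swap_apply_def]
  split_ifs with h1 h2
  · exact hS.mp (h1 ▸ hx)
  · exact hS.mpr (h2 ▸ hx)
  · exact hx

lemma shiftOn_prod_eq_zero {L : List (Perm ℤ)}
    (hL : ∀ r ∈ L, IsReflection n r ∧ Set.MapsTo r (residueClasses S) (residueClasses S)) :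
    Set.MapsTo L.prod (residueClasses S) (residueClasses S) ∧ shiftOn S L.prod = 0 := by
  induction L with
  | nil => exact ⟨fun _ hx => hx, shiftOn_one⟩
  | cons r L ih =>
    simp only [List.mem_cons, forall_eq_or_imp] at hL
    obtain ⟨⟨hr, hrS⟩, hL⟩ := hL
    obtain ⟨hLS, hL0⟩ := ih hL
    have hLp : IsPeriodic n L.prod :=
      IsReflProduct.periodic ⟨L, rfl, fun r' hr' => (hL r' hr').1, rfl⟩
    rw [List.prod_cons]
    refine ⟨hrS.comp hLS, ?_⟩
    rw [shiftOn_mul hr.periodic hLp hLS, hL0,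
      shiftOn_eq_zero_of_mul_self hr.periodic hr.mul_self hrS, add_zero]

end Residues

/-- Adding the edges one at a time, merge the two colour classes joined by each new edge. -/
lemma exists_coloring {α : Type*} [Fintype α] [DecidableEq α] (E : List (α × α)) :
    ∃ f : α → α, (∀ e ∈ E, f e.1 = f e.2) ∧
      Fintype.card α ≤ (Finset.univ.image f).card + E.length := by
  induction E with
  | nil => exact ⟨id, by simp, by simp⟩
  | cons e E ih =>
    obtain ⟨f, hfE, hcard⟩ := ih
    by_cases he : f e.1 = f e.2
    · refine ⟨f, ?_, by simp only [List.length_cons]; omega⟩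
      simpa [he] using hfE
    set merge : α → α := fun u => if u = f e.1 then f e.2 else u
    refine ⟨merge ∘ f, ?_, ?_⟩
    · simp only [List.mem_cons, forall_eq_or_imp, Function.comp_apply]
      refine ⟨by simp [merge], fun e' he' => by rw [hfE e' he']⟩
    · have hsub : (Finset.univ.image f).erase (f e.1) ⊆ Finset.univ.image (merge ∘ f) := by
        intro u hu
        obtain ⟨hu1, hu2⟩ := Finset.mem_erase.mp hu
        obtain ⟨a, -, rfl⟩ := Finset.mem_image.mp hu2
        exact Finset.mem_image.mpr ⟨a, Finset.mem_univ _, by simp [merge, hu1]⟩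
      have := Finset.card_le_card hsub
      rw [Finset.card_erase_of_mem (Finset.mem_image_of_mem f (Finset.mem_univ _))] at this
      simp only [List.length_cons]
      omega

lemma prod_ofFn_inv {G : Type*} [Group G] {m : ℕ} (f : Fin m → G) :
    (List.ofFn f).prod⁻¹ = (List.ofFn fun j => (f j.rev)⁻¹).prod := by
  rw [List.prod_inv_reverse, List.ofFn_eq_map, List.map_map, ← List.map_reverse,
    List.finRange_reverse, List.map_map, List.ofFn_eq_map]
  rfl

namespace CoxeterWord

def prefixProd (t : Fin n → Perm ℤ) (m : ℕ) : Perm ℤ := ((List.ofFn t).take m).prod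

lemma prefixProd_succ {t : Fin n → Perm ℤ} {m : ℕ} (hm : m < n) :
    prefixProd t (m + 1) = prefixProd t m * t ⟨m, hm⟩ := by
  rw [prefixProd, prefixProd, List.prod_take_succ _ _ (by simpa using hm), List.getElem_ofFn]

def ascents [NeZero n] (p : ZMod n ≃ Fin n) : Finset (ZMod n) :=
  Finset.univ.filter fun v => p (v - 1) < p v

lemma mem_ascents_rev [NeZero n] [Nontrivial (ZMod n)] (p : ZMod n ≃ Fin n) {v : ZMod n} :
    v ∈ ascents (p.trans Fin.revPerm) ↔ v ∉ ascents p := by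
  simp only [ascents, Finset.mem_filter, Finset.mem_univ, true_and, Equiv.trans_apply,
    Fin.revPerm_apply, Fin.rev_lt_rev, not_lt]
  exact ⟨le_of_lt, fun h => lt_of_le_of_ne h fun e =>
    one_ne_zero (sub_eq_self.mp (p.injective e).symm)⟩

/- The word `t` lists the `n` simple reflections, the transposition `(v, v + 1)` sitting at
position `p v`. -/
variable (p : ZMod n ≃ Fin n) {t : Fin n → Perm ℤ}
  (ht : ∀ a : ℤ, IsTransposition n a (a + 1) (t (p a)))
include ht

lemma apply_of_ne [NeZero n] {j : Fin n} {x : ℤ} (h : j ≠ p x) (h' : j ≠ p (x - 1)) :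
    t j x = x := by
  obtain ⟨b, rfl⟩ : ∃ b : ℤ, p b = j :=
    ⟨((p.symm j).val : ℤ), by rw [intCast_val_cast, p.apply_symm_apply]⟩
  refine (ht b).apply_of_intCast_ne (fun hb => h (by rw [hb])) (fun hb => h' ?_)
  rw [hb]
  push_cast
  ring_nf

lemma prefixProd_apply_of_le [NeZero n] {m : ℕ} (hm : m ≤ n) {x : ℤ} (h : m ≤ p x)
    (h' : m ≤ p (x - 1)) : prefixProd t m x = x := by
  induction m with
  | zero => rfl
  | succ m ih =>
    rw [prefixProd_succ (by omega), Perm.mul_apply,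
      apply_of_ne p ht (Fin.ne_of_val_ne (by dsimp only; omega))
        (Fin.ne_of_val_ne (by dsimp only; omega)),
      ih (by omega) (by omega) (by omega)]

/-- Read from the right, the letters push a point `x` whose left neighbour class comes earlier
along the run of decreasing positions `p x > p (x + 1) > ⋯`, until the next ascent. -/
lemma prefixProd_apply_eq_add [NeZero n] [Nontrivial (ZMod n)] {m : ℕ} (hm : m ≤ n) {x : ℤ}
    (hx : p x < m) (hx' : p (x - 1) < p x ∨ m ≤ p (x - 1)) :
    ∃ k : ℕ, 0 < k ∧ prefixProd t m x = x + k ∧ p (x + k - 1) < p (x + k) ∧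
      ∀ i : ℕ, 0 < i → i < k → p (x + i) < p (x + i - 1) := by
  induction m generalizing x with
  | zero => exact absurd hx (Nat.not_lt_zero _)
  | succ m ih =>
    rw [prefixProd_succ (by omega), Perm.mul_apply]
    by_cases hpx : (p x : ℕ) = m
    · rw [show (⟨m, _⟩ : Fin n) = p x from Fin.ext hpx.symm, (ht x).apply_left]
      have hne : p (x + 1) ≠ p x := fun h => by simpa using p.injective h
      rcases lt_or_gt_of_ne hne with hlt | hgt
      · obtain ⟨k, hk, hkx, hasc, hdesc⟩ :=
          ih (x := x + 1) (by omega) (by push_cast; omega) (Or.inr (by simp [hpx]))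
        refine ⟨k + 1, k.succ_pos, by rw [hkx]; push_cast; ring, ?_, fun i hi hik => ?_⟩
        · push_cast at hasc ⊢
          ring_nf at hasc ⊢
          exact hasc
        rcases Nat.lt_or_ge 1 i with h1 | h1
        · have := hdesc (i - 1) (by omega) (by omega)
          push_cast [Nat.cast_sub h1.le] at this ⊢
          ring_nf at this ⊢
          exact this
        · obtain rfl : i = 1 := by omega
          simpa using hlt
      · refine ⟨1, one_pos, ?_, by simpa using hgt, fun i hi hik => by omega⟩
        rw [prefixProd_apply_of_le p ht (by omega) (by push_cast; omega) (by simp [hpx])]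
        simp
    · rw [apply_of_ne p ht (Fin.ne_of_val_ne (Ne.symm hpx))
        (Fin.ne_of_val_ne (by dsimp only; rcases hx' with h | h <;> omega))]
      exact ih (by omega) (by omega) (hx'.imp_right fun h => by omega)

lemma exists_prod_apply_eq_add [NeZero n] [Nontrivial (ZMod n)] {x : ℤ}
    (hx : p (x - 1) < p x) :
    ∃ k : ℕ, 0 < k ∧ (List.ofFn t).prod x = x + k ∧ p (x + k - 1) < p (x + k) ∧
      ∀ i : ℕ, 0 < i → i < k → p (x + i) < p (x + i - 1) := by
  have := prefixProd_apply_eq_add p ht le_rfl (p x).isLt (Or.inl hx)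
  rwa [prefixProd, List.take_of_length_le (by simp)] at this

lemma add_mem_of_mapsTo [NeZero n] [Nontrivial (ZMod n)] {S : Finset (ZMod n)}
    (hS : Set.MapsTo (List.ofFn t).prod (residueClasses S) (residueClasses S)) (d : ℕ) {x : ℤ}
    (hxS : (x : ZMod n) ∈ S) (hx : p (x - 1) < p x) (hxd : p (x + d - 1) < p (x + d)) :
    (x : ZMod n) + d ∈ S := by
  induction d using Nat.strong_induction_on generalizing x with
  | _ d ih =>
    obtain ⟨k, hk, hkx, hasc, hdesc⟩ := exists_prod_apply_eq_add p ht hx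
    rcases Nat.eq_zero_or_pos d with rfl | hd
    · simpa using hxS
    have hkd : k ≤ d := by
      by_contra h
      exact lt_asymm hxd (hdesc d hd (by omega))
    have hkS : ((x + k : ℤ) : ZMod n) ∈ S := hkx ▸ hS hxS
    have := ih (d - k) (by omega) hkS (by push_cast; exact hasc)
      (by push_cast [Nat.cast_sub hkd]; ring_nf at hxd ⊢; exact hxd)
    push_cast [Nat.cast_sub hkd] at this
    convert this using 1
    ring

lemma ascents_subset_of_mapsTo [NeZero n] [Nontrivial (ZMod n)] {S : Finset (ZMod n)}
    (hS : Set.MapsTo (List.ofFn t).prod (residueClasses S) (residueClasses S))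
    (hSA : (S ∩ ascents p).Nonempty) : ascents p ⊆ S := by
  obtain ⟨v, hv⟩ := hSA
  rw [Finset.mem_inter] at hv
  intro u hu
  have hvx : ((v.val : ℤ) : ZMod n) = v := intCast_val_cast v
  have := add_mem_of_mapsTo p ht hS (u - v).val (by rw [hvx]; exact hv.1)
    (by simpa [hvx, ascents] using hv.2) (by simpa [hvx, ascents] using hu)
  simpa [hvx] using this

lemma shiftOn_pos_of_subset_ascents [NeZero n] [Nontrivial (ZMod n)] {S : Finset (ZMod n)}
    (hSA : S ⊆ ascents p) (hne : S.Nonempty) : 0 < shiftOn S (List.ofFn t).prod := by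
  refine Finset.sum_pos (fun v hv => ?_) hne
  have hvx : ((v.val : ℤ) : ZMod n) = v := intCast_val_cast v
  obtain ⟨k, hk, hkx, -⟩ :=
    exists_prod_apply_eq_add p ht (x := v.val) (by simpa [hvx, ascents] using hSA hv)
  rw [hkx]
  omega

lemma isReflection [NeZero n] [Nontrivial (ZMod n)] (j : Fin n) : IsReflection n (t j) := by
  set a : ℤ := ((p.symm j).val : ℤ)
  have hj : p a = j := by rw [intCast_val_cast, p.apply_symm_apply]
  refine ⟨a, a + 1, fun h => ?_, hj ▸ ht a⟩
  rw [← intCast_eq_intCast_iff_dvd] at h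
  simp at h

lemma isReflProduct_prod [NeZero n] [Nontrivial (ZMod n)] :
    IsReflProduct n (List.ofFn t).prod n :=
  ⟨List.ofFn t, List.length_ofFn, fun _ hr => by
    obtain ⟨j, rfl⟩ := List.mem_ofFn.mp hr
    exact isReflection p ht j, rfl⟩

lemma isTransposition_rev (a : ℤ) :
    IsTransposition n a (a + 1) ((fun j => (t j.rev)⁻¹) ((p.trans Fin.revPerm) a)) := by
  simp only [Equiv.trans_apply, Fin.revPerm_apply, Fin.rev_rev]
  rw [(ht a).inv_eq]
  exact ht a

/-- The classes that are not ascents are the ascents of the reversed word, which is the inverse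
of the word. -/
lemma eq_univ_of_shiftOn_eq_zero [NeZero n] [Nontrivial (ZMod n)] {S : Finset (ZMod n)}
    (hne : S.Nonempty) (hS : Set.MapsTo (List.ofFn t).prod (residueClasses S) (residueClasses S))
    (h0 : shiftOn S (List.ofFn t).prod = 0) : S = Finset.univ := by
  have hc : IsPeriodic n (List.ofFn t).prod := (isReflProduct_prod p ht).periodic
  have hinv := prod_ofFn_inv t
  have hS' := hS.residueClasses_inv hc
  rw [hinv] at hS'
  have hrev := isTransposition_rev p ht
  by_cases hA : (S ∩ ascents p).Nonempty
  · by_cases hD : (S ∩ ascents (p.trans Fin.revPerm)).Nonempty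
    · have hAS := ascents_subset_of_mapsTo p ht hS hA
      have hDS := ascents_subset_of_mapsTo (t := fun j => (t j.rev)⁻¹) _ hrev hS' hD
      refine Finset.eq_univ_of_forall fun v => ?_
      by_cases hv : v ∈ ascents p
      exacts [hAS hv, hDS ((mem_ascents_rev p).mpr hv)]
    · have hsub : S ⊆ ascents p := fun v hv => by
        by_contra h
        exact hD ⟨v, Finset.mem_inter.mpr ⟨hv, (mem_ascents_rev p).mpr h⟩⟩
      exact absurd h0 (shiftOn_pos_of_subset_ascents p ht hsub hne).ne'
  · have hsub : S ⊆ ascents (p.trans Fin.revPerm) := fun v hv =>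
      (mem_ascents_rev p).mpr fun h => hA ⟨v, Finset.mem_inter.mpr ⟨hv, h⟩⟩
    have := shiftOn_pos_of_subset_ascents (t := fun j => (t j.rev)⁻¹) _ hrev hsub hne
    rw [← hinv, shiftOn_inv hc hS, h0, neg_zero] at this
    exact absurd this (lt_irrefl 0)

theorem le_of_isReflProduct_prod [NeZero n] [Nontrivial (ZMod n)] {m : ℕ}
    (hm : IsReflProduct n (List.ofFn t).prod m) : n ≤ m := by
  have heven := even_add_of_isReflProduct hm (isReflProduct_prod p ht)
  obtain ⟨L, rfl, hL, hprod⟩ := hm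
  choose! a b hab hr using hL
  obtain ⟨f, hf, hcard⟩ := exists_coloring (L.map fun r => ((a r : ZMod n), (b r : ZMod n)))
  have hone : (Finset.univ.image f).card ≤ 1 := by
    by_contra! h2
    obtain ⟨_, hu, _, hv, huv⟩ := Finset.one_lt_card.mp h2
    obtain ⟨u, -, rfl⟩ := Finset.mem_image.mp hu
    obtain ⟨v, -, rfl⟩ := Finset.mem_image.mp hv
    set S := Finset.univ.filter fun w => f w = f u
    have hLS : ∀ r ∈ L, IsReflection n r ∧ Set.MapsTo r (residueClasses S) (residueClasses S) :=
      fun r hrL => ⟨⟨a r, b r, hab r hrL, hr r hrL⟩, (hr r hrL).mapsTo_residueClasses (by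
        simp [S, hf _ (List.mem_map_of_mem (f := fun r => ((a r : ZMod n), (b r : ZMod n))) hrL)])⟩
    obtain ⟨hcS, hc0⟩ := hprod ▸ shiftOn_prod_eq_zero hLS
    have hvS : v ∈ S := eq_univ_of_shiftOn_eq_zero p ht ⟨u, by simp [S]⟩ hcS hc0 ▸
      Finset.mem_univ v
    exact huv (Finset.mem_filter.mp hvS).2.symm
  rw [List.length_map, ZMod.card] at hcard
  obtain ⟨k, hk⟩ := heven
  omega

theorem reflLength_prod [NeZero n] [Nontrivial (ZMod n)] :
    reflLength n (List.ofFn t).prod = n :=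
  le_antisymm (isReflProduct_prod p ht).reflLength_le
    (le_of_isReflProduct_prod p ht (isReflProduct_prod p ht).reflLength)

end CoxeterWord

section DualGroup

variable {c : Perm ℤ}

lemma DualGroup.of_mul_of {w w' z : Perm ℤ} (hw : w ∈ PcW n c) (hw' : w' ∈ PcW n c)
    (hz : z ∈ PcW n c) (h : w * w' = z)
    (hl : reflLength n z = reflLength n w + reflLength n w') :
    PresentedGroup.of (rels := dualGroupRels n c) ⟨w, hw⟩ * PresentedGroup.of ⟨w', hw'⟩ =
      PresentedGroup.of ⟨z, hz⟩ := by
  subst h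
  exact (map_mul _ _ _).symm.trans
    (PresentedGroup.mk_eq_mk_of_mul_inv_mem ⟨⟨w, hw⟩, ⟨w', hw'⟩, hz, hl, rfl⟩)

lemma DualGroup.of_comm {x y : Perm ℤ} (hx : x ∈ PcW n c) (hy : y ∈ PcW n c)
    (hxy : x * y ∈ PcW n c) (hl : reflLength n (x * y) = reflLength n x + reflLength n y)
    (hcomm : x * y = y * x) :
    PresentedGroup.of (rels := dualGroupRels n c) ⟨x, hx⟩ * PresentedGroup.of ⟨y, hy⟩ =
      PresentedGroup.of ⟨y, hy⟩ * PresentedGroup.of ⟨x, hx⟩ := by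
  rw [DualGroup.of_mul_of hx hy hxy rfl hl,
    DualGroup.of_mul_of hy hx hxy hcomm.symm (by rw [hl, add_comm])]

lemma DualGroup.of_braid {x y : Perm ℤ} (hx : x ∈ PcW n c) (hy : y ∈ PcW n c)
    (hxy : x * y ∈ PcW n c) (hxyx : x * y * x ∈ PcW n c) (lx : reflLength n x = 1)
    (ly : reflLength n y = 1) (lxy : reflLength n (x * y) = 2)
    (lxyx : reflLength n (x * y * x) = 1) (hx2 : x * x = 1) (hy2 : y * y = 1)
    (hb : x * y * x = y * x * y) :
    PresentedGroup.of (rels := dualGroupRels n c) ⟨x, hx⟩ * PresentedGroup.of ⟨y, hy⟩ *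
        PresentedGroup.of ⟨x, hx⟩ =
      PresentedGroup.of ⟨y, hy⟩ * PresentedGroup.of ⟨x, hx⟩ * PresentedGroup.of ⟨y, hy⟩ := by
  have e1 := DualGroup.of_mul_of hx hy hxy rfl (by omega)
  have e2 := DualGroup.of_mul_of hy hxyx hxy
    (by rw [hb, ← mul_assoc, ← mul_assoc, hy2, one_mul]) (by omega)
  have e3 := DualGroup.of_mul_of hxyx hx hxy (by rw [mul_assoc, hx2, mul_one]) (by omega)
  rw [e1, ← e2, mul_assoc, e3, ← e1, mul_assoc]

end DualGroup

section ReducedWord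

variable {W : List (Perm ℤ)} (hW : ∀ r ∈ W, IsReflection n r)
  (hlen : reflLength n W.prod = W.length)
include hW hlen

lemma mem_PcW_of_mem {x : Perm ℤ} (hx : x ∈ W) : x ∈ PcW n W.prod ∧ reflLength n x = 1 := by
  simpa using mem_PcW_of_sublist hW hlen (List.singleton_sublist.mpr hx)

lemma DualGroup.of_comm_of_sublist {x y : Perm ℤ} (hsub : [x, y].Sublist W)
    (hcomm : x * y = y * x) (hx : x ∈ PcW n W.prod) (hy : y ∈ PcW n W.prod) :
    PresentedGroup.of (rels := dualGroupRels n W.prod) ⟨x, hx⟩ * PresentedGroup.of ⟨y, hy⟩ =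
      PresentedGroup.of ⟨y, hy⟩ * PresentedGroup.of ⟨x, hx⟩ := by
  obtain ⟨hxy, lxy⟩ : x * y ∈ PcW n W.prod ∧ reflLength n (x * y) = 2 := by
    simpa using mem_PcW_of_sublist hW hlen hsub
  have lx := (mem_PcW_of_mem hW hlen (hsub.subset (by simp : x ∈ [x, y]))).2
  have ly := (mem_PcW_of_mem hW hlen (hsub.subset (by simp : y ∈ [x, y]))).2
  exact DualGroup.of_comm hx hy hxy (by omega) hcomm

lemma DualGroup.of_braid_of_sublist {x y : Perm ℤ} (hsub : [x, y].Sublist W)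
    (hb : x * y * x = y * x * y) (hx : x ∈ PcW n W.prod) (hy : y ∈ PcW n W.prod) :
    PresentedGroup.of (rels := dualGroupRels n W.prod) ⟨x, hx⟩ * PresentedGroup.of ⟨y, hy⟩ *
        PresentedGroup.of ⟨x, hx⟩ =
      PresentedGroup.of ⟨y, hy⟩ * PresentedGroup.of ⟨x, hx⟩ * PresentedGroup.of ⟨y, hy⟩ := by
  have hxW : x ∈ W := hsub.subset (by simp)
  have hyW : y ∈ W := hsub.subset (by simp : y ∈ [x, y])
  have hx2 := (hW x hxW).mul_self
  obtain ⟨hxy, lxy⟩ : x * y ∈ PcW n W.prod ∧ reflLength n (x * y) = 2 := by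
    simpa using mem_PcW_of_sublist hW hlen hsub
  obtain ⟨v, hv, hWv⟩ := exists_prod_eq_mul_of_sublist hW hsub
  have ht : IsReflProduct n (x * y * x) 1 := by
    have := (hW y hyW).conj (hW x hxW).periodic
    rw [inv_eq_of_mul_eq_one_right hx2] at this
    exact .of_isReflection this
  have hfac : W.prod = x * y * x * (x * v) := by
    rw [hWv, List.prod_cons, List.prod_cons, List.prod_nil, mul_one, mul_assoc, mul_assoc,
      ← mul_assoc x x, hx2, one_mul, mul_assoc]
  obtain ⟨hxyx, lxyx⟩ := mem_PcW_of_eq_mul ht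
    ((IsReflProduct.of_isReflection (hW x hxW)).mul_s12 hv) hfac
    (by have := hsub.length_le; simp only [List.length_cons, List.length_nil] at this ⊢; omega)
  exact DualGroup.of_braid hx hy hxy hxyx (mem_PcW_of_mem hW hlen hxW).2
    (mem_PcW_of_mem hW hlen hyW).2 lxy lxyx hx2 (hW y hyW).mul_self hb

end ReducedWord

lemma List.pair_sublist_of_lt {α : Type*} {l : List α} {i j : ℕ} (hij : i < j)
    (hj : j < l.length) : [l[i], l[j]].Sublist l := by
  have hmem : l[j] ∈ l.drop (i + 1) := by
    rw [List.mem_iff_getElem]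
    exact ⟨j - (i + 1), by simp; omega, by simp only [List.getElem_drop]; congr 1; omega⟩
  have := (List.singleton_sublist.mpr hmem).cons_cons l[i]
  rw [← List.drop_eq_getElem_cons] at this
  exact this.trans (List.drop_sublist i l)

/-- The index `i` of the generator `s_i = (i + 1, i + 2)` that moves the class `v` to `v + 1`. -/
def coxeterIndex (n : ℕ) [NeZero n] : ZMod n ≃ Fin n where
  toFun v := ⟨(v - 1).val, ZMod.val_lt _⟩
  invFun i := ((i : ℕ) : ZMod n) + 1
  left_inv v := by simp
  right_inv i := Fin.ext (by simp [ZMod.val_natCast_of_lt i.isLt])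

lemma natCast_fin_add_one_eq_iff {i j : Fin n} :
    ((i : ℕ) : ZMod n) + 1 = (j : ℕ) ↔ ((i : ℕ) + 1) % n = j := by
  rw [← Nat.cast_add_one, ZMod.natCast_eq_natCast_iff', Nat.mod_eq_of_lt j.isLt]

lemma natCast_fin_eq_iff {i j : Fin n} : ((i : ℕ) : ZMod n) = (j : ℕ) ↔ i = j := by
  rw [ZMod.natCast_eq_natCast_iff', Nat.mod_eq_of_lt i.isLt, Nat.mod_eq_of_lt j.isLt, Fin.val_inj]

section Coxeter

variable {s : Fin n → Perm ℤ}
  (hs : ∀ i : Fin n, IsTransposition n ((i : ℤ) + 1) ((i : ℤ) + 2) (s i)) (e : Perm (Fin n))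
include hs

lemma isTransposition_of_intCast_eq {i : Fin n} {a : ℤ} (ha : (a : ZMod n) = (i : ℕ) + 1) :
    IsTransposition n a (a + 1) (s i) := by
  convert (hs i).of_intCast_eq (a' := a) (by rw [ha]; push_cast; ring) using 1
  ring

lemma isTransposition_coxeterIndex [NeZero n] (a : ℤ) :
    IsTransposition n a (a + 1) (s (e ((coxeterIndex n).trans e.symm a))) := by
  refine isTransposition_of_intCast_eq hs ?_
  simp only [Equiv.trans_apply, Equiv.apply_symm_apply]
  exact ((coxeterIndex n).symm_apply_apply (a : ZMod n)).symm

lemma isReflection_of_mem_ofFn [NeZero n] [Nontrivial (ZMod n)] :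
    ∀ r ∈ List.ofFn (fun j => s (e j)), IsReflection n r := fun _ hr => by
  obtain ⟨j, rfl⟩ := List.mem_ofFn.mp hr
  exact CoxeterWord.isReflection (t := fun j => s (e j)) _ (isTransposition_coxeterIndex hs e) j

lemma reflLength_prod_ofFn [NeZero n] [Nontrivial (ZMod n)] :
    reflLength n (List.ofFn fun j => s (e j)).prod = (List.ofFn fun j => s (e j)).length := by
  rw [List.length_ofFn]
  exact CoxeterWord.reflLength_prod (t := fun j => s (e j)) _ (isTransposition_coxeterIndex hs e)

lemma braid_of_adj (htwo : (2 : ZMod n) ≠ 0) {i j : Fin n} (hij : ((i : ℕ) + 1) % n = j) :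
    s i * s j * s i = s j * s i * s j := by
  have hsi := isTransposition_of_intCast_eq hs (i := i) (a := (i : ℤ) + 1) (by push_cast; ring)
  have hsj := isTransposition_of_intCast_eq hs (i := j) (a := (i : ℤ) + 1 + 1)
    (by rw [← natCast_fin_add_one_eq_iff.mpr hij]; push_cast; ring)
  rw [show (i : ℤ) + 1 + 1 + 1 = (i : ℤ) + 1 + 2 by ring] at hsj
  exact hsi.braid htwo hsj

lemma commute_of_not_adj {i j : Fin n} (hij : ((i : ℕ) + 1) % n ≠ j)
    (hji : ((j : ℕ) + 1) % n ≠ i) : s i * s j = s j * s i := by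
  by_cases hne : i = j
  · rw [hne]
  have hne' := mt natCast_fin_eq_iff.mp hne
  refine (hs i).commute (hs j) ?_ ?_ ?_ ?_ <;> push_cast <;> intro hc
  · exact hne' (by linear_combination -hc)
  · exact hij (natCast_fin_add_one_eq_iff.mp (by linear_combination -hc))
  · exact hji (natCast_fin_add_one_eq_iff.mp (by linear_combination hc))
  · exact hne' (by linear_combination -hc)

omit hs in
lemma pair_sublist_or_pair_sublist {i j : Fin n} (hij : i ≠ j) :
    [s i, s j].Sublist (List.ofFn fun k => s (e k)) ∨
      [s j, s i].Sublist (List.ofFn fun k => s (e k)) := by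
  have key : ∀ {i j : Fin n}, e.symm i < e.symm j →
      [s i, s j].Sublist (List.ofFn fun k => s (e k)) := fun {i j} h => by
    simpa using List.pair_sublist_of_lt (l := List.ofFn fun k => s (e k)) h (by simp)
  rcases lt_or_gt_of_ne (e.symm.injective.ne hij) with h | h
  exacts [.inl (key h), .inr (key h)]

lemma DualGroup.of_braid_of_adj [NeZero n] [Nontrivial (ZMod n)] (htwo : (2 : ZMod n) ≠ 0)
    {i j : Fin n} (hij : ((i : ℕ) + 1) % n = j)
    (hi : s i ∈ PcW n (List.ofFn fun k => s (e k)).prod)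
    (hj : s j ∈ PcW n (List.ofFn fun k => s (e k)).prod) :
    PresentedGroup.of (rels := dualGroupRels n _) ⟨s i, hi⟩ * PresentedGroup.of ⟨s j, hj⟩ *
        PresentedGroup.of ⟨s i, hi⟩ =
      PresentedGroup.of ⟨s j, hj⟩ * PresentedGroup.of ⟨s i, hi⟩ * PresentedGroup.of ⟨s j, hj⟩ := by
  have hb := braid_of_adj hs htwo hij
  have hW := isReflection_of_mem_ofFn hs e
  have hlen := reflLength_prod_ofFn hs e
  have hne : i ≠ j := by rintro rfl; exact absurd (natCast_fin_add_one_eq_iff.mpr hij) (by simp)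
  rcases pair_sublist_or_pair_sublist e hne with h | h
  · exact DualGroup.of_braid_of_sublist hW hlen h hb _ _
  · exact (DualGroup.of_braid_of_sublist hW hlen h hb.symm _ _).symm

lemma DualGroup.of_comm_of_not_adj [NeZero n] [Nontrivial (ZMod n)] {i j : Fin n}
    (hij : ((i : ℕ) + 1) % n ≠ j) (hji : ((j : ℕ) + 1) % n ≠ i)
    (hi : s i ∈ PcW n (List.ofFn fun k => s (e k)).prod)
    (hj : s j ∈ PcW n (List.ofFn fun k => s (e k)).prod) :
    PresentedGroup.of (rels := dualGroupRels n _) ⟨s i, hi⟩ * PresentedGroup.of ⟨s j, hj⟩ =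
      PresentedGroup.of ⟨s j, hj⟩ * PresentedGroup.of ⟨s i, hi⟩ := by
  by_cases hne : i = j
  · subst hne
    rfl
  have hcomm := commute_of_not_adj hs hij hji
  have hW := isReflection_of_mem_ofFn hs e
  have hlen := reflLength_prod_ofFn hs e
  rcases pair_sublist_or_pair_sublist e hne with h | h
  · exact DualGroup.of_comm_of_sublist hW hlen h hcomm _ _
  · exact (DualGroup.of_comm_of_sublist hW hlen h hcomm.symm _ _).symm

end Coxeter

theorem statement12 (n : ℕ) (hn : 3 ≤ n) (c : Equiv.Perm ℤ)
    (s : Fin n → Equiv.Perm ℤ)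
    (hs : ∀ i : Fin n, IsTransposition n ((i : ℤ) + 1) ((i : ℤ) + 2) (s i))
    (e : Equiv.Perm (Fin n)) (hc : c = (List.ofFn (fun j => s (e j))).prod) :
    ∃ f : AffineBraidGroup n →* DualGroup n c,
      ∀ i : Fin n, ∃ hi : s i ∈ PcW n c,
        f (PresentedGroup.of (rels := affineBraidRels n) i) =
          PresentedGroup.of (rels := dualGroupRels n c) (⟨s i, hi⟩ : PcW n c) := by
  subst hc
  have : NeZero n := ⟨by omega⟩
  have : Fact (1 < n) := ⟨by omega⟩
  have htwo : (2 : ZMod n) ≠ 0 := by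
    rw [← Nat.cast_ofNat, Ne, ZMod.natCast_eq_zero_iff]
    exact fun h => by have := Nat.le_of_dvd two_pos h; omega
  have hmem : ∀ i, s i ∈ PcW n (List.ofFn fun j => s (e j)).prod := fun i =>
    (mem_PcW_of_mem (isReflection_of_mem_ofFn hs e) (reflLength_prod_ofFn hs e)
      (List.mem_ofFn.mpr ⟨e.symm i, by simp⟩)).1
  refine ⟨PresentedGroup.toGroup (f := fun i => PresentedGroup.of ⟨s i, hmem i⟩) ?_,
    fun i => ⟨hmem i, PresentedGroup.toGroup.of _⟩⟩
  rintro r (⟨i, j, hij, rfl⟩ | ⟨i, j, hij, hji, rfl⟩) <;>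
    simp only [map_mul, map_inv, FreeGroup.lift_apply_of, mul_inv_eq_one]
  exacts [DualGroup.of_braid_of_adj hs e htwo hij _ _,
    DualGroup.of_comm_of_not_adj hs e hij hji _ _]
end
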